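/- arXiv:2102.11306 — 5 statements merged into one kernel-verified Lean document; each statement's English description precedes it below -/
import Mathlib

section
/- Let w ∈ 𝒱 be a generalized snake word of length n. Then the poset Q_w of meet-irreducible elements of P̂(w) has exactly n + 4 elements. -/
/-- The two-letter alphabet `{L, R}` for generalized snake words. -/
inductive Letter : Type
  | L
  | R
  deriving DecidableEq

/-- The element of the generalized snake poset covered by `2m+2` (besides the relations
coming from `2m+3`): it is `2m-1` when the word turns at the `m`-th letter
(i.e. `m = 1` and `w 1 = L`, or `m ≥ 2` and `w (m-1) ≠ w m`), and `2m` otherwise. -/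
def snakeSide (w : ℕ → Letter) (m : ℕ) : ℕ :=
  if (m = 1 ∧ w 1 = Letter.L) ∨ (2 ≤ m ∧ w (m - 1) ≠ w m) then 2 * m - 1 else 2 * m

/-- The covering relation of the generalized snake poset `P(w)` for the word
`ε w₁ ⋯ w_n` (the letter `w i` for `1 ≤ i ≤ n` is the `i`-th letter).
`SnakeCov n w a b` means `a ≺ b`, i.e. `a` is covered by `b`. -/
inductive SnakeCov (n : ℕ) (w : ℕ → Letter) : ℕ → ℕ → Prop
  | cov10 : SnakeCov n w 1 0
  | cov20 : SnakeCov n w 2 0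
  | cov31 : SnakeCov n w 3 1
  | cov32 : SnakeCov n w 3 2
  | covOdd (m : ℕ) (h1 : 1 ≤ m) (h2 : m ≤ n) : SnakeCov n w (2 * m + 3) (2 * m + 1)
  | covBot (m : ℕ) (h1 : 1 ≤ m) (h2 : m ≤ n) : SnakeCov n w (2 * m + 3) (2 * m + 2)
  | covSide (m : ℕ) (h1 : 1 ≤ m) (h2 : m ≤ n) : SnakeCov n w (2 * m + 2) (snakeSide w m)

/-- The order relation of the generalized snake poset `P(w)` on `{0, …, 2n+3}`:
the reflexive-transitive closure of the covering relation. -/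
def SnakeLE (n : ℕ) (w : ℕ → Letter) : ℕ → ℕ → Prop :=
  Relation.ReflTransGen (SnakeCov n w)

theorem snakeCov_lt {n : ℕ} {w : ℕ → Letter} {a b : ℕ} (h : SnakeCov n w a b) : b < a := by
  cases h
  case covSide m h1 h2 => unfold snakeSide; split <;> omega
  all_goals omega

theorem snakeLE_le {n : ℕ} {w : ℕ → Letter} {a b : ℕ} (h : SnakeLE n w a b) : b ≤ a := by
  induction h with
  | refl => exact le_refl a
  | tail _ hc ih => exact le_trans (le_of_lt (snakeCov_lt hc)) ih

/-- The generalized snake poset `P(ε w₁ ⋯ w_n)` as a type: its elements are `0, 1, …, 2n+3`. -/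
def SnakePoset (n : ℕ) (w : ℕ → Letter) : Type := Fin (2 * n + 4)

instance (n : ℕ) (w : ℕ → Letter) : PartialOrder (SnakePoset n w) where
  le a b := SnakeLE n w a.1 b.1
  le_refl _ := Relation.ReflTransGen.refl
  le_trans _ _ _ h1 h2 := Relation.ReflTransGen.trans h1 h2
  le_antisymm a b h1 h2 := Fin.ext (Nat.le_antisymm (snakeLE_le h2) (snakeLE_le h1))

/-- The number of linear extensions of `P(ε w₁ ⋯ w_n)`: order-preserving bijections
onto the chain `Fin (2n+4)`.  By Stanley's theorem this is the normalized volume of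
the order polytope `O(P(w))`. -/
noncomputable def linExtCount (n : ℕ) (w : ℕ → Letter) : ℕ :=
  Nat.card {f : SnakePoset n w ≃ Fin (2 * n + 4) //
    ∀ a b : SnakePoset n w, a ≤ b → f a ≤ f b}

/-- The collection of filters (upper order ideals) of `P(ε w₁ ⋯ w_n)`,
as subsets of `{0, …, 2n+3} ⊆ ℕ`. -/
def SnakeFilters (n : ℕ) (w : ℕ → Letter) : Set (Set ℕ) :=
  {A | (∀ a ∈ A, a < 2 * n + 4) ∧ ∀ a ∈ A, ∀ b, SnakeLE n w a b → b ∈ A}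

/-- The filter of `P(ε w₁ ⋯ w_n)` generated by a set `S`: its upward closure. -/
def snakeUp (n : ℕ) (w : ℕ → Letter) (S : Set ℕ) : Set ℕ :=
  {b | ∃ a ∈ S, SnakeLE n w a b}

/-- The alternating word `L R L R ⋯` (letter `i` is `L` for odd `i`),
defining the snake poset `S_n = P(ε L R L R ⋯)`. -/
def altWord : ℕ → Letter := fun i => if i % 2 = 1 then Letter.L else Letter.R

/-- Flipping a letter `L ↔ R`. -/
def Letter.flip : Letter → Letter
  | Letter.L => Letter.R
  | Letter.R => Letter.L

/-- The swap operation `f_i`: flip all letters with index `≥ i`. -/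
def swapFrom (w : ℕ → Letter) (i : ℕ) : ℕ → Letter :=
  fun j => if i ≤ j then (w j).flip else w j

/-- Membership in `𝒱`: the letter sequence `w₁ ⋯ w_n` contains neither `LRL` nor
`RLR` as a consecutive substring. -/
def InV (n : ℕ) (w : ℕ → Letter) : Prop :=
  ∀ i, 1 ≤ i → i + 2 ≤ n → w i = w (i + 1) ∨ w (i + 1) = w (i + 2)

/-- The order on `{0, …, 2n+5}` making `P̂(w)`: the poset `P(w)` (elements `0, …, 2n+3`)
with a new maximum `2n+4` and a new minimum `2n+5` adjoined. -/
def SnakeHatLE (n : ℕ) (w : ℕ → Letter) (a b : ℕ) : Prop :=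
  a = 2 * n + 5 ∨ b = 2 * n + 4 ∨ (a < 2 * n + 4 ∧ b < 2 * n + 4 ∧ SnakeLE n w a b)

/-- The lattice `P̂(w)`: `P(w)` with a new minimum `0̂ = 2n+5` and maximum `1̂ = 2n+4`. -/
def SnakeHat (n : ℕ) (w : ℕ → Letter) : Type := Fin (2 * n + 6)

instance (n : ℕ) (w : ℕ → Letter) : PartialOrder (SnakeHat n w) where
  le a b := SnakeHatLE n w a.1 b.1
  le_refl a := by
    by_cases h5 : a.1 = 2 * n + 5
    · exact Or.inl h5
    · by_cases h4 : a.1 = 2 * n + 4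
      · exact Or.inr (Or.inl h4)
      · have := a.2
        exact Or.inr (Or.inr ⟨by omega, by omega, Relation.ReflTransGen.refl⟩)
  le_trans a b c hab hbc := by
    rcases hab with h | h | ⟨ha, hb, hab⟩
    · exact Or.inl h
    · rcases hbc with h' | h' | ⟨hb', hc, hbc⟩
      · exact absurd h' (by omega)
      · exact Or.inr (Or.inl h')
      · exact absurd h (by omega)
    · rcases hbc with h' | h' | ⟨hb', hc, hbc⟩
      · exact absurd h' (by omega)
      · exact Or.inr (Or.inl h')
      · exact Or.inr (Or.inr ⟨ha, hc, Relation.ReflTransGen.trans hab hbc⟩)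
  le_antisymm a b h1 h2 := by
    apply Fin.ext
    rcases h1 with h | h | ⟨ha, hb, hab⟩ <;>
      rcases h2 with h' | h' | ⟨ha', hb', hba⟩ <;>
        first
          | omega
          | exact Nat.le_antisymm (snakeLE_le hba) (snakeLE_le hab)

/-- An element `x` of a (finite) lattice is meet-irreducible if it is not the maximum
element and whenever `x` is the meet (greatest lower bound) of `y` and `z`,
one has `x = y` or `x = z`. -/
def MeetIrred {α : Type*} [PartialOrder α] (x : α) : Prop :=
  ¬IsTop x ∧ ∀ y z : α, IsGLB {y, z} x → x = y ∨ x = z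

/-- The poset `Q_w` of meet-irreducible elements of `P̂(w)`, as an induced subposet. -/
abbrev SnakeQ (n : ℕ) (w : ℕ → Letter) : Type :=
  {x : SnakeHat n w // MeetIrred x}

/-- The vertex set of the order polytope `O(α)` of a finite poset `α`: the 0/1 indicator
vectors of the filters of `α`. -/
def OPVertexSet (α : Type*) [PartialOrder α] : Set (α → ℝ) :=
  {v | ∃ A : Set α, (∀ a ∈ A, ∀ b, a ≤ b → b ∈ A) ∧ v = A.indicator fun _ => (1 : ℝ)}

/-- A circuit of a point configuration: an affinely dependent set all of whose proper
subsets are affinely independent. -/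
def IsAffCircuit {α : Type*} (Z : Set (α → ℝ)) : Prop :=
  ¬AffineIndependent ℝ (Subtype.val : Z → (α → ℝ)) ∧
    ∀ Y : Set (α → ℝ), Y ⊂ Z → AffineIndependent ℝ (Subtype.val : Y → (α → ℝ))

/-- The adjacency relation of the graph `G(w)` on vertices `{0, 1, …, n}`:
consecutive indices are adjacent, and `i` and `i+2` are adjacent when
`w (i+1) ≠ w (i+2)` (a turn of the word). -/
def snakeAdj (n : ℕ) (w : ℕ → Letter) (i j : ℕ) : Prop :=
  (j = i + 1 ∧ j ≤ n) ∨ (i = j + 1 ∧ i ≤ n) ∨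
    (j = i + 2 ∧ j ≤ n ∧ w (i + 1) ≠ w (i + 2)) ∨
    (i = j + 2 ∧ i ≤ n ∧ w (j + 1) ≠ w (j + 2))

/-- `𝒢(w)`: the collection of nonempty subsets of `{0, …, n}` inducing connected
subgraphs of `G(w)`. -/
def GSets (n : ℕ) (w : ℕ → Letter) : Set (Set ℕ) :=
  {S | S.Nonempty ∧ (∀ i ∈ S, i ≤ n) ∧
    ∀ a ∈ S, ∀ b ∈ S,
      Relation.ReflTransGen (fun x y => x ∈ S ∧ y ∈ S ∧ snakeAdj n w x y) a b}

/-! In a finite lattice an element is meet-irreducible exactly when it has a single upper cover.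
In `P̂(w)` the new minimum `0̂` is covered only by the minimum `2n+3` of `P(w)`, the maximal
element `0` only by `1̂`, and `1`, `2` and every `2m+2` (`1 ≤ m ≤ n`) by exactly one element of
`P(w)`. On the other hand `1̂` is excluded and each odd element `2k+3` is the meet of `2k+1` and
`2k+2`. So `Q_w` consists of `0, 1, 2, 0̂` and the `n` elements `2m+2`. -/

theorem meetIrred_of_lt_of_forall_lt_imp_le {α : Type*} [PartialOrder α] {x s : α}
    (hxs : x < s) (hs : ∀ y, x < y → s ≤ y) : MeetIrred x := by
  refine ⟨fun htop => (htop s).not_gt hxs, fun y z hglb => ?_⟩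
  by_contra! hne
  have hsyz : s ∈ lowerBounds ({y, z} : Set α) := by
    rintro b (rfl | rfl)
    · exact hs b (lt_of_le_of_ne (hglb.1 (by simp)) hne.1)
    · exact hs b (lt_of_le_of_ne (hglb.1 (by simp)) hne.2)
  exact (hglb.2 hsyz).not_gt hxs

section SnakePoset

variable {n : ℕ} {w : ℕ → Letter}

theorem snakeCov_odd {k : ℕ} (hk : k ≤ n) : SnakeCov n w (2 * k + 3) (2 * k + 1) := by
  rcases Nat.eq_zero_or_pos k with rfl | hk1
  · exact SnakeCov.cov31
  · exact SnakeCov.covOdd k hk1 hk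

theorem snakeCov_even {k : ℕ} (hk : k ≤ n) : SnakeCov n w (2 * k + 3) (2 * k + 2) := by
  rcases Nat.eq_zero_or_pos k with rfl | hk1
  · exact SnakeCov.cov32
  · exact SnakeCov.covBot k hk1 hk

theorem exists_snakeCov_of_lt {u : ℕ} (hu : u < 2 * n + 3) :
    ∃ c, c ≤ 2 * n + 3 ∧ SnakeCov n w c u := by
  rcases u with _ | u
  · exact ⟨1, by omega, SnakeCov.cov10⟩
  rcases Nat.even_or_odd' u with ⟨k, rfl | rfl⟩
  · exact ⟨2 * k + 3, by omega, snakeCov_odd (by omega)⟩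
  · exact ⟨2 * k + 3, by omega, snakeCov_even (by omega)⟩

theorem snakeLE_minimum {u : ℕ} (hu : u ≤ 2 * n + 3) : SnakeLE n w (2 * n + 3) u := by
  induction h : 2 * n + 3 - u using Nat.strong_induction_on generalizing u with
  | _ d ih =>
    rcases hu.eq_or_lt with rfl | hlt
    · exact Relation.ReflTransGen.refl
    · obtain ⟨c, hc, hcov⟩ := exists_snakeCov_of_lt (w := w) hlt
      exact (ih _ (by have := snakeCov_lt hcov; omega) hc rfl).tail hcov

theorem snakeCov_left_lt {a b : ℕ} (h : SnakeCov n w a b) : a < 2 * n + 4 := by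
  cases h <;> omega

theorem snakeCov_one {c : ℕ} (h : SnakeCov n w 1 c) : c = 0 := by
  cases h; rfl

theorem snakeCov_two {c : ℕ} (h : SnakeCov n w 2 c) : c = 0 := by
  generalize ha : 2 = a at h
  cases h <;> omega

theorem snakeCov_even_succ {m c : ℕ} (hm : 1 ≤ m) (h : SnakeCov n w (2 * m + 2) c) :
    c = snakeSide w m := by
  generalize ha : 2 * m + 2 = a at h
  cases h with
  | covSide m' =>
    obtain rfl : m' = m := by omega
    rfl
  | _ => omega

theorem snakeCov_into_odd {k c : ℕ} (h : SnakeCov n w c (2 * k + 1)) :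
    c = 2 * k + 3 ∨ (c = 2 * k + 4 ∧ snakeSide w (k + 1) = 2 * k + 1) := by
  generalize ha : 2 * k + 1 = a at h
  cases h with
  | covSide m =>
    obtain rfl : m = k + 1 := by unfold snakeSide at ha; split at ha <;> omega
    exact Or.inr ⟨by omega, rfl⟩
  | _ => omega

theorem snakeCov_into_even {k c : ℕ} (h : SnakeCov n w c (2 * k + 2)) :
    c = 2 * k + 3 ∨ (c = 2 * k + 4 ∧ snakeSide w (k + 1) = 2 * k + 2) := by
  generalize ha : 2 * k + 2 = a at h
  cases h with
  | covSide m =>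
    obtain rfl : m = k + 1 := by unfold snakeSide at ha; split at ha <;> omega
    exact Or.inr ⟨by omega, rfl⟩
  | _ => omega

/-- `2k+3` is the meet of `2k+1` and `2k+2` in `P(w)`: the only other element covering either
of them is `2k+4`, and it covers just one. -/
theorem snakeLE_odd_of_snakeLE_of_snakeLE {k u : ℕ} (h₁ : SnakeLE n w u (2 * k + 1))
    (h₂ : SnakeLE n w u (2 * k + 2)) : SnakeLE n w u (2 * k + 3) := by
  rcases h₁.cases_tail with rfl | ⟨c, hc, hcov⟩
  · have := snakeLE_le h₂; omega
  rcases snakeCov_into_odd hcov with rfl | ⟨rfl, hside⟩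
  · exact hc
  rcases h₂.cases_tail with rfl | ⟨c', hc', hcov'⟩
  · have := snakeLE_le hc; omega
  rcases snakeCov_into_even hcov' with rfl | ⟨-, hside'⟩
  · exact hc'
  · omega

end SnakePoset

section SnakeHat

variable {n : ℕ} {w : ℕ → Letter}

theorem snakeHat_lt_of_snakeCov {x y : SnakeHat n w} (h : SnakeCov n w x.1 y.1) : x < y := by
  have hyx := snakeCov_lt h
  have hx := snakeCov_left_lt h
  refine lt_of_le_of_ne (Or.inr (Or.inr ⟨hx, by omega, .single h⟩)) ?_
  rintro rfl
  exact lt_irrefl _ hyx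

theorem meetIrred_of_snakeCov_unique {x s : SnakeHat n w} (hs : SnakeCov n w x.1 s.1)
    (huniq : ∀ c, SnakeCov n w x.1 c → c = s.1) : MeetIrred x := by
  have hsx := snakeCov_lt hs
  have hx := snakeCov_left_lt hs
  refine meetIrred_of_lt_of_forall_lt_imp_le (snakeHat_lt_of_snakeCov hs) fun y hxy => ?_
  rcases hxy.le with h | h | ⟨-, hy, hle⟩
  · omega
  · exact Or.inr (Or.inl h)
  rcases hle.cases_head with h | ⟨c, hc, hcy⟩
  · exact absurd (Fin.ext h) hxy.ne
  · exact Or.inr (Or.inr ⟨by omega, hy, huniq c hc ▸ hcy⟩)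

theorem meetIrred_of_val_eq_zero {x : SnakeHat n w} (hx : x.1 = 0) : MeetIrred x := by
  refine meetIrred_of_lt_of_forall_lt_imp_le (s := ⟨2 * n + 4, by omega⟩)
    (lt_of_le_of_ne (Or.inr (Or.inl rfl)) (Fin.ne_of_val_ne (by simp only [hx]; omega)))
    fun y hxy => ?_
  rcases hxy.le with h | h | ⟨-, -, hle⟩
  · omega
  · exact Or.inr (Or.inl h)
  · have := snakeLE_le hle
    exact absurd (Fin.ext (by omega)) hxy.ne

theorem meetIrred_of_val_eq_bot {x : SnakeHat n w} (hx : x.1 = 2 * n + 5) : MeetIrred x := by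
  refine meetIrred_of_lt_of_forall_lt_imp_le (s := ⟨2 * n + 3, by omega⟩)
    (lt_of_le_of_ne (Or.inl hx) (Fin.ne_of_val_ne (by simp only [hx]; omega)))
    fun y hxy => ?_
  have hy : y.1 ≠ 2 * n + 5 := fun h => hxy.ne (Fin.ext (hx.trans h.symm))
  rcases Nat.lt_or_ge y.1 (2 * n + 4) with hy4 | hy4
  · exact Or.inr (Or.inr ⟨Nat.lt_succ_self _, hy4, snakeLE_minimum (by omega)⟩)
  · exact Or.inr (Or.inl (by have := y.2; omega))

theorem not_meetIrred_of_val_eq_top {x : SnakeHat n w} (hx : x.1 = 2 * n + 4) :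
    ¬MeetIrred x :=
  fun hmi => hmi.1 fun _ => Or.inr (Or.inl hx)

theorem not_meetIrred_of_val_eq_odd {x : SnakeHat n w} {k : ℕ} (hk : k ≤ n)
    (hx : x.1 = 2 * k + 3) : ¬MeetIrred x := by
  intro hmi
  let y : SnakeHat n w := ⟨2 * k + 1, by omega⟩
  let z : SnakeHat n w := ⟨2 * k + 2, by omega⟩
  have hy : y.1 = 2 * k + 1 := rfl
  have hz : z.1 = 2 * k + 2 := rfl
  have hglb : IsGLB {y, z} x := by
    refine ⟨?_, fun u hu => ?_⟩
    · rintro b (rfl | rfl)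
      · exact Or.inr (Or.inr ⟨by omega, by omega, hx ▸ .single (snakeCov_odd hk)⟩)
      · exact Or.inr (Or.inr ⟨by omega, by omega, hx ▸ .single (snakeCov_even hk)⟩)
    rcases hu (Set.mem_insert y _) with h | h | ⟨hu4, -, huy⟩
    · exact Or.inl h
    · omega
    rcases hu (Set.mem_insert_of_mem _ rfl) with h | h | ⟨-, -, huz⟩
    · exact Or.inl h
    · omega
    · exact Or.inr (Or.inr ⟨hu4, by omega, hx ▸ snakeLE_odd_of_snakeLE_of_snakeLE huy huz⟩)
  rcases hmi.2 y z hglb with h | h <;>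
    · have := congrArg Fin.val h; omega

theorem meetIrred_iff (x : SnakeHat n w) :
    MeetIrred x ↔ x.1 = 2 * n + 5 ∨ x.1 ≤ 2 ∨ (x.1 % 2 = 0 ∧ 4 ≤ x.1 ∧ x.1 ≤ 2 * n + 2) := by
  have hx := x.2
  constructor
  · intro hmi
    by_contra! h
    rcases Nat.even_or_odd' x.1 with ⟨k, hk | hk⟩
    · exact not_meetIrred_of_val_eq_top (by omega) hmi
    · exact not_meetIrred_of_val_eq_odd (k := k - 1) (by omega) (by omega) hmi
  rintro (hbot | hsmall | ⟨hev, h4, hle⟩)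
  · exact meetIrred_of_val_eq_bot hbot
  · interval_cases hx0 : x.1
    · exact meetIrred_of_val_eq_zero hx0
    · exact meetIrred_of_snakeCov_unique (s := ⟨0, by omega⟩)
        (hx0 ▸ SnakeCov.cov10) fun c hc => snakeCov_one (hx0 ▸ hc)
    · exact meetIrred_of_snakeCov_unique (s := ⟨0, by omega⟩)
        (hx0 ▸ SnakeCov.cov20) fun c hc => snakeCov_two (hx0 ▸ hc)
  · obtain ⟨m, hm, hmn, hxm⟩ : ∃ m, 1 ≤ m ∧ m ≤ n ∧ x.1 = 2 * m + 2 :=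
      ⟨x.1 / 2 - 1, by omega, by omega, by omega⟩
    have hside : snakeSide w m < 2 * n + 4 := by unfold snakeSide; split_ifs <;> omega
    exact meetIrred_of_snakeCov_unique (s := ⟨snakeSide w m, by omega⟩)
      (hxm ▸ SnakeCov.covSide m hm hmn)
      fun c hc => snakeCov_even_succ hm (hxm ▸ hc)

end SnakeHat

/-- The `i`-th meet-irreducible element of `P̂(w)`, listing `0, 1, 2, 0̂ = 2n+5, 4, 6, …, 2n+2`. -/
def snakeQVal (n i : ℕ) : ℕ :=
  if i ≤ 2 then i else if i = 3 then 2 * n + 5 else 2 * i - 4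

theorem snakeQVal_injective (n : ℕ) : Function.Injective (snakeQVal n) := by
  intro i j h
  unfold snakeQVal at h
  split_ifs at h <;> omega

noncomputable def snakeQEquiv (n : ℕ) (w : ℕ → Letter) : Fin (n + 4) ≃ SnakeQ n w :=
  Equiv.ofBijective
    (fun i => ⟨⟨snakeQVal n i, by unfold snakeQVal; split_ifs <;> omega⟩,
      (meetIrred_iff _).2 (by unfold snakeQVal; dsimp only; split_ifs <;> omega)⟩)
    ⟨fun i j h => Fin.ext (snakeQVal_injective n (congrArg (fun x : SnakeQ n w => x.1.1) h)),
      fun x => by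
        have hx := (meetIrred_iff x.1).1 x.2
        refine ⟨⟨if x.1.1 ≤ 2 then x.1.1 else if x.1.1 = 2 * n + 5 then 3 else x.1.1 / 2 + 2,
          by split_ifs <;> omega⟩, Subtype.ext (Fin.ext ?_)⟩
        dsimp only; unfold snakeQVal; split_ifs <;> omega⟩

theorem stmt8_general (n : ℕ) (w : ℕ → Letter) :
    Nat.card (SnakeQ n w) = n + 4 := by
  rw [← Nat.card_congr (snakeQEquiv n w), Nat.card_fin]

theorem stmt8 (n : ℕ) (w : ℕ → Letter) (hw : InV n w) :
    Nat.card (SnakeQ n w) = n + 4 :=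
  stmt8_general n w
end

section
/- Let w ∈ 𝒱 be a generalized snake word of length n. Then no circuit of the vertex set V(Q_w) of the order polytope O(Q_w) contains the zero vector v_∅ (the indicator vector of the empty filter) or the all-ones vector v_{Q_w} (the indicator vector of the filter consisting of all of Q_w). -/
/-! The poset `Q_w` has a greatest element, the coatom `0` of `P̂(w)`, and a least element,
`0̂`, which is meet-irreducible because `2n+3` lies below every other element of `P̂(w)`.
Hence every nonempty filter of `Q_w` contains the maximum and every proper filter misses the
minimum, so a coordinate hyperplane contains all vertices of `O(Q_w)` but `v_∅` (resp.
`v_{Q_w}`). That vertex is then not in the affine span of the others, whereas every point of a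
circuit is. -/

section AffineCircuit

variable {k V P : Type*} [DivisionRing k] [AddCommGroup V] [Module k V] [AddTorsor V P]

theorem affineIndependent_of_affineIndependent_sdiff_singleton {Z : Set P} {v : P}
    (hZ : AffineIndependent k ((↑) : ↥(Z \ {v}) → P)) (hv : v ∉ affineSpan k (Z \ {v})) :
    AffineIndependent k ((↑) : Z → P) := by
  by_cases hvZ : v ∈ Z
  · have hrange : Set.range (fun u : {u : Z // u ≠ ⟨v, hvZ⟩} => (u : P)) = Z \ {v} := by
      ext u; simp [and_comm]
    refine AffineIndependent.affineIndependent_of_notMem_span (i := ⟨v, hvZ⟩) ?_ ?_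
    · refine AffineIndependent.of_set_of_injective ?_ fun x y h => Subtype.ext (Subtype.ext h)
      rwa [hrange]
    · convert hv using 3
      ext u; simp [and_comm]
  · rwa [Set.sdiff_singleton_eq_self hvZ] at hZ

theorem AffineMap.apply_eq_of_mem_affineSpan {k V₁ P₁ V₂ P₂ : Type*} [Ring k] [AddCommGroup V₁]
    [Module k V₁] [AddTorsor V₁ P₁] [AddCommGroup V₂] [Module k V₂] [AddTorsor V₂ P₂]
    (f : P₁ →ᵃ[k] P₂) {s : Set P₁} {q : P₂} (hs : ∀ u ∈ s, f u = q) {v : P₁}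
    (hv : v ∈ affineSpan k s) : f v = q := by
  have hmap : f v ∈ affineSpan k (f '' s) := by
    rw [← AffineSubspace.map_span]; exact ⟨v, hv, rfl⟩
  have himage : f '' s ⊆ {q} := by
    rintro _ ⟨u, hu, rfl⟩; exact hs u hu
  exact (AffineSubspace.mem_affineSpan_singleton k V₂).1 (affineSpan_mono k himage hmap)

end AffineCircuit

theorem IsAffCircuit.mem_affineSpan_sdiff {α : Type*} {Z : Set (α → ℝ)} (hZ : IsAffCircuit Z)
    {v : α → ℝ} (hv : v ∈ Z) : v ∈ affineSpan ℝ (Z \ {v}) := by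
  by_contra hspan
  refine hZ.1 (affineIndependent_of_affineIndependent_sdiff_singleton (hZ.2 _ ?_) hspan)
  exact Set.sdiff_singleton_ssubset.2 hv

section OrderPolytope

variable {α : Type*} [PartialOrder α]

theorem OPVertexSet.apply_eq_one_of_isTop {t : α} (ht : IsTop t) {u : α → ℝ}
    (hu : u ∈ OPVertexSet α) (hu0 : u ≠ 0) : u t = 1 := by
  obtain ⟨A, hA, rfl⟩ := hu
  obtain ⟨a, ha⟩ : A.Nonempty := by
    rw [Set.nonempty_iff_ne_empty]; rintro rfl; exact hu0 (Set.indicator_empty _)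
  exact Set.indicator_of_mem (hA a ha t (ht a)) _

theorem OPVertexSet.apply_eq_zero_of_isBot {b : α} (hb : IsBot b) {u : α → ℝ}
    (hu : u ∈ OPVertexSet α) (hu1 : u ≠ 1) : u b = 0 := by
  obtain ⟨A, hA, rfl⟩ := hu
  refine Set.indicator_of_notMem (fun hbA => hu1 ?_) _
  rw [Set.eq_univ_of_forall fun a => hA b hbA a (hb a), Set.indicator_univ]
  rfl

theorem IsAffCircuit.zero_notMem {t : α} (ht : IsTop t) {Z : Set (α → ℝ)}
    (hZ : Z ⊆ OPVertexSet α) (hc : IsAffCircuit Z) : (0 : α → ℝ) ∉ Z := fun h0 =>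
  zero_ne_one <| (LinearMap.proj t : (α → ℝ) →ₗ[ℝ] ℝ).toAffineMap.apply_eq_of_mem_affineSpan
    (fun _ hu => OPVertexSet.apply_eq_one_of_isTop ht (hZ hu.1) hu.2)
    (hc.mem_affineSpan_sdiff h0)

theorem IsAffCircuit.one_notMem {b : α} (hb : IsBot b) {Z : Set (α → ℝ)}
    (hZ : Z ⊆ OPVertexSet α) (hc : IsAffCircuit Z) : (1 : α → ℝ) ∉ Z := fun h1 =>
  one_ne_zero <| (LinearMap.proj b : (α → ℝ) →ₗ[ℝ] ℝ).toAffineMap.apply_eq_of_mem_affineSpan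
    (fun _ hu => OPVertexSet.apply_eq_zero_of_isBot hb (hZ hu.1) hu.2)
    (hc.mem_affineSpan_sdiff h1)

end OrderPolytope

section MeetIrred

variable {α : Type*} [PartialOrder α]

theorem meetIrred_of_covBy_of_isTop {x t : α} (ht : IsTop t) (hxt : x ⋖ t) : MeetIrred x := by
  have hcases : ∀ y, x ≤ y → x = y ∨ y = t := fun y hxy =>
    (eq_or_lt_of_le hxy).imp id fun hlt => (ht y).eq_of_not_lt (hxt.2 hlt)
  refine ⟨fun hx => hxt.lt.not_ge (hx t), fun y z hglb => ?_⟩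
  rcases hcases y (hglb.1 (by simp)) with hy | rfl
  · exact Or.inl hy
  rcases hcases z (hglb.1 (by simp)) with hz | rfl
  · exact Or.inr hz
  exact absurd (hglb.2 (by simp [lowerBounds])) hxt.lt.not_ge

theorem meetIrred_of_forall_ne_le {a b : α} (hab : ¬a ≤ b) (ha : ∀ y, y ≠ b → a ≤ y) :
    MeetIrred b := by
  refine ⟨fun hb => hab (hb a), fun y z hglb => ?_⟩
  by_contra! hyz
  have hlower : a ∈ lowerBounds {y, z} := by
    rintro _ (rfl | rfl)
    exacts [ha _ hyz.1.symm, ha _ hyz.2.symm]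
  exact hab (hglb.2 hlower)

end MeetIrred

section SnakePoset

variable {n : ℕ} {w : ℕ → Letter}

theorem exists_snakeCov_of_pos {y : ℕ} (hy0 : 0 < y) (hy : y < 2 * n + 4) :
    ∃ b, SnakeCov n w y b := by
  obtain hy3 | hy3 := Nat.lt_or_ge y 4
  · interval_cases y
    exacts [⟨0, .cov10⟩, ⟨0, .cov20⟩, ⟨1, .cov31⟩]
  obtain ⟨m, rfl | rfl⟩ := Nat.even_or_odd' y
  · obtain ⟨m, rfl⟩ : ∃ k, m = k + 1 := ⟨m - 1, by omega⟩
    exact ⟨_, by simpa only [mul_add] using SnakeCov.covSide (w := w) m (by omega) (by omega)⟩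
  · obtain ⟨m, rfl⟩ : ∃ k, m = k + 1 := ⟨m - 1, by omega⟩
    exact ⟨_, by simpa only [mul_add] using SnakeCov.covOdd (w := w) m (by omega) (by omega)⟩

theorem exists_snakeCov_of_lt_s10 {y : ℕ} (hy : y < 2 * n + 3) :
    ∃ a, a < 2 * n + 4 ∧ SnakeCov n w a y := by
  obtain hy3 | hy3 := Nat.lt_or_ge y 3
  · interval_cases y
    exacts [⟨1, by omega, .cov10⟩, ⟨3, by omega, .cov31⟩, ⟨3, by omega, .cov32⟩]
  obtain ⟨m, rfl | rfl⟩ := Nat.even_or_odd' y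
  · obtain ⟨m, rfl⟩ : ∃ k, m = k + 1 := ⟨m - 1, by omega⟩
    refine ⟨2 * m + 3, by omega, ?_⟩
    simpa only [mul_add] using SnakeCov.covBot (w := w) m (by omega) (by omega)
  · exact ⟨2 * m + 3, by omega, .covOdd m (by omega) (by omega)⟩

theorem snakeLE_zero (y : ℕ) (hy : y < 2 * n + 4) : SnakeLE n w y 0 := by
  rcases Nat.eq_zero_or_pos y with rfl | hy0
  · exact .refl
  obtain ⟨b, hb⟩ := exists_snakeCov_of_pos (w := w) hy0 hy
  have hby : b < y := snakeCov_lt hb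
  exact .head hb (snakeLE_zero b (by omega))

theorem snakeLE_last (y : ℕ) (hy : y < 2 * n + 4) : SnakeLE n w (2 * n + 3) y := by
  rcases eq_or_lt_of_le (Nat.le_of_lt_succ hy) with rfl | hy3
  · exact .refl
  obtain ⟨a, ha, hc⟩ := exists_snakeCov_of_lt_s10 (w := w) hy3
  have hya : y < a := snakeCov_lt hc
  exact .tail (snakeLE_last a ha) hc
termination_by 2 * n + 3 - y

end SnakePoset

section SnakeHat

variable (n : ℕ) (w : ℕ → Letter)

def snakeHatTop : SnakeHat n w := ⟨2 * n + 4, by omega⟩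

def snakeHatZero : SnakeHat n w := ⟨0, by omega⟩

def snakeHatBot : SnakeHat n w := ⟨2 * n + 5, by omega⟩

theorem isTop_snakeHatTop : IsTop (snakeHatTop n w) := fun _ => Or.inr (Or.inl rfl)

theorem isBot_snakeHatBot : IsBot (snakeHatBot n w) := fun _ => Or.inl rfl

variable {n w}

theorem le_snakeHatZero {x : SnakeHat n w} (hx : x ≠ snakeHatTop n w) :
    x ≤ snakeHatZero n w := by
  show SnakeHatLE n w x.1 0
  rcases eq_or_ne x.1 (2 * n + 5) with hx5 | hx5
  · exact Or.inl hx5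
  have hx4 : x.1 ≠ 2 * n + 4 := fun h => hx (Fin.ext h)
  have hlt : x.1 < 2 * n + 4 := by omega
  exact Or.inr (Or.inr ⟨hlt, by omega, snakeLE_zero x.1 hlt⟩)

variable (n w)

theorem snakeHatZero_covBy_snakeHatTop : snakeHatZero n w ⋖ snakeHatTop n w := by
  refine ⟨lt_of_le_of_ne ((isTop_snakeHatTop n w) _) fun h => ?_, fun c hc hct => ?_⟩
  · exact absurd (congrArg Fin.val h) (by simp [snakeHatZero, snakeHatTop])
  · have hc' : SnakeHatLE n w 0 c.1 := hc.le
    rcases hc' with h | h | ⟨-, -, h⟩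
    · omega
    · exact hct.ne (Fin.ext h)
    · exact hc.ne (Fin.ext (Nat.le_zero.1 (snakeLE_le h)).symm)

theorem meetIrred_snakeHatBot : MeetIrred (snakeHatBot n w) := by
  refine meetIrred_of_forall_ne_le (a := ⟨2 * n + 3, by omega⟩) ?_ fun y hy => ?_
  · rintro (h | h | ⟨-, h, -⟩) <;> simp [snakeHatBot] at h
  · show SnakeHatLE n w (2 * n + 3) y.1
    have hy5 : y.1 ≠ 2 * n + 5 := fun h => hy (Fin.ext h)
    rcases eq_or_ne y.1 (2 * n + 4) with hy4 | hy4
    · exact Or.inr (Or.inl hy4)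
    have hlt : y.1 < 2 * n + 4 := by omega
    exact Or.inr (Or.inr ⟨by omega, hlt, snakeLE_last y.1 hlt⟩)

theorem SnakeQ.exists_isTop : ∃ t : SnakeQ n w, IsTop t :=
  ⟨⟨snakeHatZero n w, meetIrred_of_covBy_of_isTop (isTop_snakeHatTop n w)
      (snakeHatZero_covBy_snakeHatTop n w)⟩,
    fun q => le_snakeHatZero fun h => q.2.1 (h ▸ isTop_snakeHatTop n w)⟩

theorem SnakeQ.exists_isBot : ∃ b : SnakeQ n w, IsBot b :=
  ⟨⟨snakeHatBot n w, meetIrred_snakeHatBot n w⟩, fun q => isBot_snakeHatBot n w q.1⟩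

end SnakeHat

theorem stmt10_general (n : ℕ) (w : ℕ → Letter) :
    ∀ Z : Set (SnakeQ n w → ℝ), Z ⊆ OPVertexSet (SnakeQ n w) → IsAffCircuit Z →
      (fun _ => (0 : ℝ)) ∉ Z ∧ (fun _ => (1 : ℝ)) ∉ Z := by
  intro Z hZ hc
  obtain ⟨t, ht⟩ := SnakeQ.exists_isTop n w
  obtain ⟨b, hb⟩ := SnakeQ.exists_isBot n w
  exact ⟨hc.zero_notMem ht hZ, hc.one_notMem hb hZ⟩

theorem stmt10 (n : ℕ) (w : ℕ → Letter) (hw : InV n w) :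
    ∀ Z : Set (SnakeQ n w → ℝ), Z ⊆ OPVertexSet (SnakeQ n w) → IsAffCircuit Z →
      (fun _ => (0 : ℝ)) ∉ Z ∧ (fun _ => (1 : ℝ)) ∉ Z :=
  stmt10_general n w
end

section
/- Let n ≥ 2, let u = w_0⋯w_{n−1} ∈ 𝒱 and w = u·w_n ∈ 𝒱 be generalized snake words, and for 0 ≤ k ≤ n−1 let N_k be the number of sets S ∈ 𝒢(u) with k ∈ S and k+1 ∉ S (the condition k+1 ∉ S being vacuous when k = n−1). Then |𝒢(ε)| = 1, |𝒢(εw_1)| = 3, and: (a) if w_n = w_{n−1} then |𝒢(w)| = |𝒢(u)| + N_{n−1} + 1; (b) if w_n ≠ w_{n−1} then |𝒢(w)| = |𝒢(u)| + N_{n−1} + N_{n−2} + 1. -/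
/-!
In `G(w₀ ⋯ wₙ₊₁)` the last vertex `n + 1` is adjacent only to `n` and, when `wₙ ≠ wₙ₊₁`, to
`n - 1`; these neighbours are adjacent to each other, so deleting `n + 1` from a connected set
keeps it connected. Hence the connected sets are those of `G(w₀ ⋯ wₙ)`, the singleton `{n + 1}`,
and `T ∪ {n + 1}` for each connected `T ⊆ {0, …, n}` meeting the neighbourhood of `n + 1`;
at a turn these `T` split according to whether they contain `n`.
-/

open Relation

section ConnectedIn

variable {α : Type*} {r s : α → α → Prop} {S : Set α} {v : α}

def IsConnectedIn (r : α → α → Prop) (S : Set α) : Prop :=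
  ∀ a ∈ S, ∀ b ∈ S, ReflTransGen (fun x y => x ∈ S ∧ y ∈ S ∧ r x y) a b

lemma isConnectedIn_singleton (r : α → α → Prop) (a : α) : IsConnectedIn r {a} := by
  rintro x rfl y rfl
  exact .refl

lemma IsConnectedIn.mono_rel (hS : IsConnectedIn r S)
    (h : ∀ x ∈ S, ∀ y ∈ S, r x y → s x y) : IsConnectedIn s S :=
  fun a ha b hb => ReflTransGen.mono (fun x y ⟨hx, hy, hxy⟩ => ⟨hx, hy, h x hx y hy hxy⟩) _ _
    (hS a ha b hb)

lemma reflTransGen_restrict_symm [Std.Symm r] {a b : α}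
    (h : ReflTransGen (fun x y => x ∈ S ∧ y ∈ S ∧ r x y) a b) :
    ReflTransGen (fun x y => x ∈ S ∧ y ∈ S ∧ r x y) b a :=
  ReflTransGen.mono (fun _ _ ⟨hx, hy, hxy⟩ => ⟨hy, hx, symm hxy⟩) _ _ (ReflTransGen.swap _ _ h)

lemma IsConnectedIn.insert_of_adj [Std.Symm r] (hS : IsConnectedIn r S) {c : α} (hc : c ∈ S)
    (hcv : r c v) : IsConnectedIn r (insert v S) := by
  have lift : ∀ a ∈ S, ∀ b ∈ S,
      ReflTransGen (fun x y => x ∈ insert v S ∧ y ∈ insert v S ∧ r x y) a b :=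
    fun a ha b hb => ReflTransGen.mono
      (fun x y ⟨hx, hy, hxy⟩ => ⟨.inr hx, .inr hy, hxy⟩) _ _ (hS a ha b hb)
  have hcv' : ReflTransGen (fun x y => x ∈ insert v S ∧ y ∈ insert v S ∧ r x y) c v :=
    .single ⟨.inr hc, .inl rfl, hcv⟩
  rintro a (rfl | ha) b (rfl | hb)
  · exact .refl
  · exact (reflTransGen_restrict_symm hcv').trans (lift c hc b hb)
  · exact (lift a ha c hc).trans hcv'
  · exact lift a ha b hb

/-- Every path through `v` is rerouted through `p`, which by the clique condition is equal or
adjacent to every other neighbour of `v`. -/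
lemma IsConnectedIn.diff_singleton [Std.Symm r] (hS : IsConnectedIn r S)
    (hclique : ∀ x y, r x v → r y v → x = y ∨ r x y) {p : α} (hp : p ∈ S) (hpv : p ≠ v)
    (hpr : r p v) : IsConnectedIn r (S \ {v}) := by
  classical
  set R := fun x y => x ∈ S \ {v} ∧ y ∈ S \ {v} ∧ r x y
  have hp' : p ∈ S \ {v} := ⟨hp, hpv⟩
  have from_p : ∀ y ∈ S \ {v}, r y v → ReflTransGen R p y := by
    intro y hy hyv
    rcases hclique p y hpr hyv with rfl | hpy
    · exact .refl
    · exact .single ⟨hp', hy, hpy⟩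
  have step : ∀ x y, x ∈ S ∧ y ∈ S ∧ r x y →
      ReflTransGen R (if x = v then p else x) (if y = v then p else y) := by
    rintro x y ⟨hx, hy, hxy⟩
    by_cases hxv : x = v <;> by_cases hyv : y = v <;> simp only [hxv, hyv, if_true, if_false]
    · exact .refl
    · subst hxv; exact from_p y ⟨hy, hyv⟩ (symm hxy)
    · subst hyv; exact reflTransGen_restrict_symm (from_p x ⟨hx, hxv⟩ hxy)
    · exact .single ⟨⟨hx, hxv⟩, ⟨hy, hyv⟩, hxy⟩
  rintro a ⟨ha, hav : a ≠ v⟩ b ⟨hb, hbv : b ≠ v⟩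
  have := ReflTransGen.lift' _ step _ _ (hS a ha b hb)
  simpa only [Function.onFun, if_neg hav, if_neg hbv] using this

lemma isConnectedIn_insert_iff [Std.Symm r] (hv : ¬ r v v)
    (hclique : ∀ x y, r x v → r y v → x = y ∨ r x y) (hvS : v ∉ S) :
    IsConnectedIn r (insert v S) ↔ S = ∅ ∨ IsConnectedIn r S ∧ ∃ c ∈ S, r c v := by
  constructor
  · intro hS
    obtain rfl | ⟨a, ha⟩ := S.eq_empty_or_nonempty
    · exact .inl rfl
    obtain h | ⟨c, -, hc, -, hcv⟩ := (hS a (.inr ha) v (.inl rfl)).cases_tail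
    · exact absurd (h ▸ ha) hvS
    have hcS : c ∈ S := hc.resolve_left fun h => hv (h ▸ hcv)
    refine .inr ⟨?_, c, hcS, hcv⟩
    simpa [Set.insert_sdiff_self_of_notMem hvS] using
      hS.diff_singleton hclique (.inr hcS) (fun h => hvS (h ▸ hcS)) hcv
  · rintro (rfl | ⟨hS, c, hc, hcv⟩)
    · simpa using isConnectedIn_singleton r v
    · exact hS.insert_of_adj hc hcv

end ConnectedIn

section SnakeGraph

variable {n : ℕ} {w : ℕ → Letter}

instance : Std.Symm (snakeAdj n w) where
  symm _ _ h := by unfold snakeAdj at *; tauto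

lemma snakeAdj_irrefl (x : ℕ) : ¬ snakeAdj n w x x := by
  unfold snakeAdj; omega

lemma snakeAdj_succ_iff {x y : ℕ} (hx : x ≤ n) (hy : y ≤ n) :
    snakeAdj (n + 1) w x y ↔ snakeAdj n w x y := by
  unfold snakeAdj; grind

lemma snakeAdj_succ_last_iff {x : ℕ} :
    snakeAdj (n + 1) w x (n + 1) ↔ x = n ∨ x + 1 = n ∧ w n ≠ w (n + 1) := by
  unfold snakeAdj; grind

lemma snakeAdj_succ_last_clique (x y : ℕ) (hx : snakeAdj (n + 1) w x (n + 1))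
    (hy : snakeAdj (n + 1) w y (n + 1)) : x = y ∨ snakeAdj (n + 1) w x y := by
  rw [snakeAdj_succ_last_iff] at hx hy
  unfold snakeAdj; omega

end SnakeGraph

section GSets

variable {n : ℕ} {w : ℕ → Letter} {S : Set ℕ}

lemma mem_gsets_iff :
    S ∈ GSets n w ↔ S.Nonempty ∧ (∀ i ∈ S, i ≤ n) ∧ IsConnectedIn (snakeAdj n w) S :=
  Iff.rfl

lemma gsets_finite (n : ℕ) (w : ℕ → Letter) : (GSets n w).Finite :=
  (Set.finite_Iic n).finite_subsets.subset fun _ hS => hS.2.1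

lemma succ_notMem_of_mem_gsets (hS : S ∈ GSets n w) : n + 1 ∉ S :=
  fun h => by have := hS.2.1 _ h; omega

lemma isConnectedIn_snakeAdj_succ_iff (hS : ∀ i ∈ S, i ≤ n) :
    IsConnectedIn (snakeAdj (n + 1) w) S ↔ IsConnectedIn (snakeAdj n w) S :=
  ⟨fun h => h.mono_rel fun x hx y hy => (snakeAdj_succ_iff (hS x hx) (hS y hy)).mp,
    fun h => h.mono_rel fun x hx y hy => (snakeAdj_succ_iff (hS x hx) (hS y hy)).mpr⟩

lemma mem_gsets_succ_iff_of_notMem (h : n + 1 ∉ S) : S ∈ GSets (n + 1) w ↔ S ∈ GSets n w := by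
  have hbound : (∀ i ∈ S, i ≤ n + 1) ↔ ∀ i ∈ S, i ≤ n :=
    forall₂_congr fun i hi => by grind
  simp only [mem_gsets_iff, hbound]
  exact and_congr_right fun _ => and_congr_right isConnectedIn_snakeAdj_succ_iff

lemma insert_mem_gsets_succ_iff (h : n + 1 ∉ S) :
    insert (n + 1) S ∈ GSets (n + 1) w ↔
      S = ∅ ∨ S ∈ GSets n w ∧ ∃ c ∈ S, snakeAdj (n + 1) w c (n + 1) := by
  have hbound : (∀ i ∈ insert (n + 1) S, i ≤ n + 1) ↔ ∀ i ∈ S, i ≤ n := by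
    simp only [Set.forall_mem_insert, le_refl, true_and]
    exact forall₂_congr fun i hi => by grind
  rw [mem_gsets_iff, isConnectedIn_insert_iff (snakeAdj_irrefl _) snakeAdj_succ_last_clique h,
    hbound, mem_gsets_iff]
  obtain rfl | hne := S.eq_empty_or_nonempty
  · simp
  · simp only [Set.insert_nonempty, hne.ne_empty, hne, true_and, false_or]
    exact ⟨fun ⟨hb, hc, hadj⟩ => ⟨⟨hb, (isConnectedIn_snakeAdj_succ_iff hb).mp hc⟩, hadj⟩,
      fun ⟨⟨hb, hc⟩, hadj⟩ => ⟨hb, (isConnectedIn_snakeAdj_succ_iff hb).mpr hc, hadj⟩⟩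

end GSets

lemma Set.mem_image_insert_iff_of_notMem {α : Type*} {a : α} {U : Set (Set α)}
    (hU : ∀ T ∈ U, a ∉ T) {S : Set α} : S ∈ insert a '' U ↔ a ∈ S ∧ S \ {a} ∈ U := by
  constructor
  · rintro ⟨T, hT, rfl⟩
    exact ⟨Set.mem_insert a T, by rwa [Set.insert_sdiff_self_of_notMem (hU T hT)]⟩
  · rintro ⟨ha, hS⟩
    exact ⟨S \ {a}, hS, by rw [Set.insert_sdiff_singleton, Set.insert_eq_of_mem ha]⟩

lemma Set.injOn_insert_of_notMem {α : Type*} {a : α} {U : Set (Set α)} (hU : ∀ T ∈ U, a ∉ T) :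
    U.InjOn (insert a) := fun S hS T hT h => by
  rw [← Set.insert_sdiff_self_of_notMem (hU S hS), h, Set.insert_sdiff_self_of_notMem (hU T hT)]

section Count

variable {n : ℕ} {w : ℕ → Letter}

def touchingGSets (n : ℕ) (w : ℕ → Letter) : Set (Set ℕ) :=
  {S | S ∈ GSets n w ∧ ∃ c ∈ S, snakeAdj (n + 1) w c (n + 1)}

lemma notMem_of_mem_insert_empty_touchingGSets :
    ∀ S ∈ insert ∅ (touchingGSets n w), n + 1 ∉ S := by
  rintro S (rfl | hS)
  · exact Set.notMem_empty _
  · exact succ_notMem_of_mem_gsets hS.1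

lemma gsets_succ_eq :
    GSets (n + 1) w = GSets n w ∪ insert (n + 1) '' insert ∅ (touchingGSets n w) := by
  ext S
  rw [Set.mem_union, Set.mem_image_insert_iff_of_notMem notMem_of_mem_insert_empty_touchingGSets]
  by_cases hS : n + 1 ∈ S
  · have hdiff : n + 1 ∉ S \ {n + 1} := fun h => h.2 rfl
    have hSn : S ∉ GSets n w := fun h => succ_notMem_of_mem_gsets h hS
    conv_lhs => rw [← Set.insert_eq_of_mem hS, ← Set.insert_sdiff_singleton]
    rw [insert_mem_gsets_succ_iff hdiff]
    simp [hS, hSn, touchingGSets]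
  · simp [hS, mem_gsets_succ_iff_of_notMem hS]

lemma ncard_gsets_succ :
    (GSets (n + 1) w).ncard = (GSets n w).ncard + (touchingGSets n w).ncard + 1 := by
  have hfin : (touchingGSets n w).Finite := (gsets_finite n w).subset fun _ hS => hS.1
  have hdisj : Disjoint (GSets n w) (insert (n + 1) '' insert ∅ (touchingGSets n w)) :=
    Set.disjoint_left.mpr fun _ hS ⟨_, _, hT⟩ =>
      succ_notMem_of_mem_gsets hS (hT ▸ Set.mem_insert _ _)
  have hempty : (∅ : Set ℕ) ∉ touchingGSets n w := fun h => Set.not_nonempty_empty h.1.1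
  rw [gsets_succ_eq, Set.ncard_union_eq hdisj (gsets_finite n w) ((hfin.insert ∅).image _),
    (Set.injOn_insert_of_notMem notMem_of_mem_insert_empty_touchingGSets).ncard_image,
    Set.ncard_insert_of_notMem hempty hfin, add_assoc]

end Count

section Formulas

variable {n : ℕ} {w : ℕ → Letter}

lemma gsets_zero (w : ℕ → Letter) : GSets 0 w = {{0}} := by
  ext S
  refine ⟨fun ⟨hne, hS, _⟩ => (hne.subset_singleton_iff).mp fun i hi => ?_, ?_⟩
  · simpa using hS i hi
  · rintro rfl
    exact ⟨Set.singleton_nonempty 0, by simp, isConnectedIn_singleton _ 0⟩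

lemma ncard_gsets_zero (w : ℕ → Letter) : (GSets 0 w).ncard = 1 := by
  rw [gsets_zero, Set.ncard_singleton]

lemma ncard_gsets_one (w : ℕ → Letter) : (GSets 1 w).ncard = 3 := by
  have htouch : touchingGSets 0 w = {{0}} := by
    ext S
    simp only [touchingGSets, gsets_zero, Set.mem_ofPred_eq, Set.mem_singleton_iff,
      and_iff_left_iff_imp]
    rintro rfl
    exact ⟨0, rfl, .inl ⟨rfl, le_rfl⟩⟩
  rw [ncard_gsets_succ, htouch, ncard_gsets_zero, Set.ncard_singleton]

lemma ncard_gsets_succ_of_eq (h : w (n + 1) = w n) :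
    (GSets (n + 1) w).ncard =
      (GSets n w).ncard + {S | S ∈ GSets n w ∧ n ∈ S ∧ n + 1 ∉ S}.ncard + 1 := by
  have htouch : touchingGSets n w = {S | S ∈ GSets n w ∧ n ∈ S ∧ n + 1 ∉ S} := by
    ext S
    simp only [touchingGSets, snakeAdj_succ_last_iff, h, ne_eq, not_true_eq_false, and_false,
      or_false, exists_eq_right, Set.mem_ofPred_eq]
    exact and_congr_right fun hS => (and_iff_left (succ_notMem_of_mem_gsets hS)).symm
  rw [ncard_gsets_succ, htouch]

lemma ncard_gsets_succ_succ_of_ne (h : w (n + 2) ≠ w (n + 1)) :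
    (GSets (n + 2) w).ncard =
      (GSets (n + 1) w).ncard + {S | S ∈ GSets (n + 1) w ∧ n + 1 ∈ S ∧ n + 2 ∉ S}.ncard +
        {S | S ∈ GSets (n + 1) w ∧ n ∈ S ∧ n + 1 ∉ S}.ncard + 1 := by
  set A := {S | S ∈ GSets (n + 1) w ∧ n + 1 ∈ S ∧ n + 2 ∉ S}
  set B := {S | S ∈ GSets (n + 1) w ∧ n ∈ S ∧ n + 1 ∉ S}
  have htouch : touchingGSets (n + 1) w = A ∪ B := by
    ext S
    have hturn : w (n + 1) ≠ w (n + 1 + 1) := Ne.symm h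
    simp only [touchingGSets, snakeAdj_succ_last_iff, hturn, Nat.add_right_cancel_iff, ne_eq,
      not_false_eq_true, and_true, Set.mem_union, A, B, Set.mem_ofPred_eq]
    constructor
    · rintro ⟨hS, c, hc, rfl | rfl⟩
      · exact .inl ⟨hS, hc, succ_notMem_of_mem_gsets hS⟩
      · by_cases h1 : c + 1 ∈ S
        · exact .inl ⟨hS, h1, succ_notMem_of_mem_gsets hS⟩
        · exact .inr ⟨hS, hc, h1⟩
    · rintro (⟨hS, h1, -⟩ | ⟨hS, h0, -⟩)
      · exact ⟨hS, _, h1, .inl rfl⟩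
      · exact ⟨hS, _, h0, .inr rfl⟩
  have hdisj : Disjoint A B := Set.disjoint_left.mpr fun _ hA hB => hB.2.2 hA.2.1
  have hfin : ∀ P : Set ℕ → Prop, {S | S ∈ GSets (n + 1) w ∧ P S}.Finite :=
    fun _ => (gsets_finite _ w).subset fun _ hS => hS.1
  rw [ncard_gsets_succ, htouch, Set.ncard_union_eq hdisj (hfin _) (hfin _), add_assoc _ A.ncard]

end Formulas

theorem stmt14_general (n : ℕ) (w : ℕ → Letter) (hn : 2 ≤ n) :
    (GSets 0 w).ncard = 1 ∧
    (GSets 1 w).ncard = 3 ∧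
    (w n = w (n - 1) →
      (GSets n w).ncard =
        (GSets (n - 1) w).ncard +
          {S | S ∈ GSets (n - 1) w ∧ (n - 1) ∈ S ∧ n ∉ S}.ncard + 1) ∧
    (w n ≠ w (n - 1) →
      (GSets n w).ncard =
        (GSets (n - 1) w).ncard +
          {S | S ∈ GSets (n - 1) w ∧ (n - 1) ∈ S ∧ n ∉ S}.ncard +
          {S | S ∈ GSets (n - 1) w ∧ (n - 2) ∈ S ∧ (n - 1) ∉ S}.ncard + 1) := by
  obtain ⟨k, rfl⟩ : ∃ k, n = k + 2 := ⟨n - 2, by omega⟩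
  exact ⟨ncard_gsets_zero w, ncard_gsets_one w, ncard_gsets_succ_of_eq,
    ncard_gsets_succ_succ_of_ne⟩

theorem stmt14 (n : ℕ) (w : ℕ → Letter) (hn : 2 ≤ n)
    (hu : InV (n - 1) w) (hw : InV n w) :
    (GSets 0 w).ncard = 1 ∧
    (GSets 1 w).ncard = 3 ∧
    (w n = w (n - 1) →
      (GSets n w).ncard =
        (GSets (n - 1) w).ncard +
          {S | S ∈ GSets (n - 1) w ∧ (n - 1) ∈ S ∧ n ∉ S}.ncard + 1) ∧
    (w n ≠ w (n - 1) →
      (GSets n w).ncard =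
        (GSets (n - 1) w).ncard +
          {S | S ∈ GSets (n - 1) w ∧ (n - 1) ∈ S ∧ n ∉ S}.ncard +
          {S | S ∈ GSets (n - 1) w ∧ (n - 2) ∈ S ∧ (n - 1) ∉ S}.ncard + 1) :=
  stmt14_general n w hn
end

section
/- Let w ∈ 𝒱 be a generalized snake word of length n and let d = |Q_w| (so d = n + 4). For every affinely independent family u_0, u_1, …, u_d of d+1 points of the vertex set V(Q_w) ⊆ ℝ^{Q_w} of the order polytope O(Q_w), the d × d matrix with columns u_1 − u_0, …, u_d − u_0 has determinant ±1; i.e., every full-dimensional simplex whose vertices lie in V(Q_w) has normalized volume one (Euclidean volume 1/d!). Consequently, every triangulation of O(Q_w) using vertices of O(Q_w) is unimodular. -/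
/-!
Apart from `0̂` and `0`, the meet-irreducible elements of `P̂(w)` are `1, 2, 4, …, 2n+2`, and
`Q_w` is the disjoint union of two chains: `0̂ < ⋯ < 0` through the irreducibles on one side of the
snake, and the irreducibles on the other side. List the first chain upwards, then one extra
coordinate, then the second chain downwards. In this order a filter of `Q_w` together with the
extra coordinate is an interval, so bordering the matrix of a simplex with a row of ones and
permuting its rows gives a matrix whose columns are indicators of intervals. Such a matrix is a
lower unitriangular matrix times the incidence matrix of a directed graph, hence has determinant
`0` or `±1`, and affine independence excludes `0`.
-/

open Matrix Finset

lemma Fin.val_succAbove_eq {N : ℕ} (r : Fin (N + 1)) (i : Fin N) :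
    (r.succAbove i : ℕ) = if (i : ℕ) < r then (i : ℕ) else (i : ℕ) + 1 := by
  unfold Fin.succAbove
  split_ifs <;> simp_all [Fin.lt_def]

lemma Fin.sum_ite_val_eq (f : ℕ → ℝ) (m c : ℕ) :
    ∑ i : Fin m, (if (i : ℕ) = c then f i else 0) = if c < m then f c else 0 := by
  simp only [Fin.sum_univ_eq_sum_range (fun i => if i = c then f i else 0), Finset.sum_ite_eq',
    Finset.mem_range]

lemma mul_mem_range_signType {x y : ℝ} (hx : x ∈ Set.range SignType.cast)
    (hy : y ∈ Set.range SignType.cast) : x * y ∈ Set.range SignType.cast := by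
  obtain ⟨s, rfl⟩ := hx
  obtain ⟨t, rfl⟩ := hy
  exact ⟨s * t, SignType.coe_mul s t⟩

lemma Int.cast_units_mem_range_signType (s : ℤˣ) : ((s : ℤ) : ℝ) ∈ Set.range SignType.cast := by
  rcases Int.units_eq_one_or s with rfl | rfl
  exacts [⟨1, by simp⟩, ⟨-1, by simp⟩]

lemma eq_one_or_eq_neg_one_of_mem_range_signType {x : ℝ} (hx : x ∈ Set.range SignType.cast)
    (h0 : x ≠ 0) : x = 1 ∨ x = -1 := by
  obtain ⟨s, rfl⟩ := hx
  cases s <;> simp_all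

/-- Column `j` is `e (a j) - e (b j)`, where an endpoint `≥ N` contributes nothing: the incidence
matrix of a directed graph on `Fin N` some of whose arcs leave the vertex set. -/
def arcMatrix (N : ℕ) (a b : Fin N → ℕ) : Matrix (Fin N) (Fin N) ℝ :=
  of fun i j => (if (i : ℕ) = a j then 1 else 0) - (if (i : ℕ) = b j then 1 else 0)

lemma arcMatrix_apply_mem (N : ℕ) (a b : Fin N → ℕ) (i j : Fin N) :
    arcMatrix N a b i j ∈ Set.range SignType.cast := by
  simp only [arcMatrix, of_apply]
  split_ifs
  exacts [⟨0, by simp⟩, ⟨1, by simp⟩, ⟨-1, by simp⟩, ⟨0, by simp⟩]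

lemma det_arcMatrix_eq_zero {N : ℕ} {a b : Fin (N + 1) → ℕ}
    (h : ∀ j, (a j < N + 1 ↔ b j < N + 1)) : (arcMatrix (N + 1) a b).det = 0 := by
  rw [← exists_vecMul_eq_zero_iff]
  refine ⟨fun _ => 1, one_ne_zero, funext fun j => ?_⟩
  have h1 := Fin.sum_ite_val_eq 1 (N + 1) (a j)
  have h2 := Fin.sum_ite_val_eq 1 (N + 1) (b j)
  simp only [Pi.one_apply] at h1 h2
  simp only [vecMul, dotProduct, one_mul, arcMatrix, of_apply, Finset.sum_sub_distrib, h1, h2,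
    Pi.zero_apply, h j, sub_self]

theorem det_arcMatrix_mem (N : ℕ) (a b : Fin N → ℕ) :
    (arcMatrix N a b).det ∈ Set.range SignType.cast := by
  induction N with
  | zero => exact ⟨1, by simp⟩
  | succ N ih =>
    by_cases h : ∀ j, (a j < N + 1 ↔ b j < N + 1)
    · exact ⟨0, by rw [det_arcMatrix_eq_zero h, SignType.coe_zero]⟩
    · obtain ⟨j, hj⟩ := not_forall.mp h
      obtain ⟨r, hr⟩ : ∃ r : Fin (N + 1), (r : ℕ) = if a j < N + 1 then a j else b j :=
        ⟨⟨if a j < N + 1 then a j else b j, by split_ifs <;> omega⟩, rfl⟩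
      have hcol : ∀ i, i ≠ r → arcMatrix (N + 1) a b i j = 0 := by
        intro i hi
        have hi' : (i : ℕ) ≠ r := Fin.val_ne_of_ne hi
        have := i.isLt
        simp only [arcMatrix, of_apply]
        split_ifs at hr ⊢ <;> first | omega | simp
      -- renumbering of the rows once row `r` is deleted; `r` itself becomes an absent endpoint
      let ψ : ℕ → ℕ := fun v => if v < r then v else if v = r then N else v - 1
      have hψ : ∀ (i : Fin N) (v : ℕ), (r.succAbove i : ℕ) = v ↔ (i : ℕ) = ψ v := by
        intro i v
        have := i.isLt
        rw [Fin.val_succAbove_eq]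
        simp only [ψ]
        split_ifs <;> omega
      have hminor : (arcMatrix (N + 1) a b).submatrix r.succAbove j.succAbove =
          arcMatrix N (ψ ∘ a ∘ j.succAbove) (ψ ∘ b ∘ j.succAbove) := by
        ext i k
        simp only [arcMatrix, submatrix_apply, of_apply, Function.comp, hψ]
      rw [det_succ_column _ j, Finset.sum_eq_single r (fun i _ hi => by rw [hcol i hi]; ring)
        (by simp), hminor]
      exact mul_mem_range_signType (mul_mem_range_signType ⟨(-1) ^ ((r : ℕ) + j), by simp⟩
        (arcMatrix_apply_mem _ _ _ _ _)) (ih _ _)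

def intervalMatrix (N : ℕ) (a b : Fin N → ℕ) : Matrix (Fin N) (Fin N) ℝ :=
  of fun i j => if a j ≤ (i : ℕ) ∧ (i : ℕ) < b j then 1 else 0

theorem det_intervalMatrix_mem (N : ℕ) (a b : Fin N → ℕ) :
    (intervalMatrix N a b).det ∈ Set.range SignType.cast := by
  let L : Matrix (Fin N) (Fin N) ℝ := of fun i k => if (k : ℕ) ≤ i then 1 else 0
  have hL : L.det = 1 := by
    rw [det_of_isLowerTriangular L fun i k hik => if_neg (not_le.mpr hik)]
    simp [L]
  -- summing `e a - e b` over the rows `≤ i` gives the indicator of `[a, b)`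
  have hLarc : intervalMatrix N a b = L * arcMatrix N (fun j => min (a j) (b j)) b := by
    ext i j
    have hsum : ∀ c, ∑ k, L i k * (if (k : ℕ) = c then 1 else 0) = if c ≤ i then 1 else 0 := by
      intro c
      simp only [L, of_apply, mul_ite, mul_one, mul_zero,
        Fin.sum_ite_val_eq (fun k => if k ≤ (i : ℕ) then 1 else 0)]
      have := i.isLt
      split_ifs <;> first | omega | rfl
    simp only [intervalMatrix, arcMatrix, mul_apply, of_apply, mul_sub, Finset.sum_sub_distrib,
      hsum]
    split_ifs <;> first | omega | simp
  rw [hLarc, det_mul, hL, one_mul]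
  exact det_arcMatrix_mem N _ _

theorem det_cons_one_eq_det_sub (d : ℕ) (v : Fin (d + 1) → Fin d → ℝ) :
    (of fun i j : Fin (d + 1) => (Fin.cons 1 (v j) : Fin (d + 1) → ℝ) i).det =
      (of fun i j : Fin d => v j.succ i - v 0 i).det := by
  let C : Matrix (Fin (d + 1)) (Fin (d + 1)) ℝ := of fun j =>
    Fin.cons (if j = 0 then 1 else 0) (if j = 0 then v 0 else v j - v 0)
  rw [← det_transpose, det_eq_of_forall_row_eq_smul_add_const (B := C)
    (fun j => if j = 0 then 0 else 1) 0 (if_pos rfl)]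
  · rw [det_succ_column_zero, Fin.sum_univ_succ, ← det_transpose]
    simp [C, Matrix.submatrix, Matrix.transpose]
  · intro j i
    cases i using Fin.cases <;> by_cases hj : j = 0 <;> simp [C, hj]

theorem det_sub_ne_zero_of_affineIndependent {ι : Type*} {d : ℕ} (u : Fin (d + 1) → ι → ℝ)
    (hind : AffineIndependent ℝ u) (e : ι ≃ Fin d) :
    (of fun i j : Fin d => (u j.succ - u 0) (e.symm i)).det ≠ 0 := by
  have hvsub := (affineIndependent_iff_linearIndependent_vsub ℝ u 0).mp hind
  have hli := hvsub.comp (fun j => (⟨j.succ, Fin.succ_ne_zero j⟩ : {x // x ≠ (0 : Fin (d + 1))}))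
    fun j k h => Fin.succ_injective _ (congrArg Subtype.val h)
  rw [← isUnit_iff_ne_zero, ← isUnit_iff_isUnit_det, ← linearIndependent_cols_iff_isUnit]
  exact hli.map' (LinearEquiv.funCongrLeft ℝ ℝ e.symm).toLinearMap (LinearEquiv.ker _)

section TwoChains

open Classical

variable {Q : Type*} [Fintype Q] {C D : Set Q}

lemma card_filter_mem_and_lt {q : Q} (hq : q ∈ C) (p : Q → Prop) (hp : ¬p q) :
    #{c | c ∈ C ∧ p c} < #{c | c ∈ C} :=
  card_lt_card ((ssubset_iff_of_subset fun c => by simp +contextual).mpr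
    ⟨q, by simp [hq], by simp [hp]⟩)

lemma card_filter_add_card_filter_of_isCompl (hCD : IsCompl C D) :
    #{c | c ∈ C} + #{c | c ∈ D} = Fintype.card Q := by
  rw [← hCD.compl_eq, ← card_univ]
  convert card_filter_add_card_filter_not (s := univ) (· ∈ C)

variable [PartialOrder Q]

lemma IsChain.mem_upperSet_iff_card_le (hC : IsChain (· ≤ ·) C) {U : Set Q} (hU : IsUpperSet U)
    {q : Q} (hq : q ∈ C) : q ∈ U ↔ #{c | c ∈ C ∧ c ∉ U} ≤ #{c | c ∈ C ∧ c < q} := by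
  constructor
  · intro hqU
    refine card_le_card fun c => ?_
    simp only [mem_filter, mem_univ, true_and]
    rintro ⟨hcC, hcU⟩
    refine ⟨hcC, (hC.total hcC hq).elim (fun h => h.lt_of_ne ?_) fun h => absurd (hU h hqU) hcU⟩
    rintro rfl
    exact hcU hqU
  · intro hle
    by_contra hqU
    refine hle.not_gt (card_lt_card ((ssubset_iff_of_subset fun c => ?_).mpr ⟨q, ?_⟩))
    · simp only [mem_filter, mem_univ, true_and]
      exact fun ⟨hcC, hcq⟩ => ⟨hcC, fun hcU => hqU (hU hcq.le hcU)⟩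
    · simp [hq, hqU]

lemma IsChain.mem_upperSet_iff_card_lt (hC : IsChain (· ≤ ·) C) {U : Set Q} (hU : IsUpperSet U)
    {q : Q} (hq : q ∈ C) : q ∈ U ↔ #{c | c ∈ C ∧ q < c} < #{c | c ∈ C ∧ c ∈ U} := by
  constructor
  · intro hqU
    refine card_lt_card ((ssubset_iff_of_subset fun c => ?_).mpr ⟨q, by simp [hq, hqU], by simp⟩)
    simp only [mem_filter, mem_univ, true_and]
    exact fun ⟨hcC, hqc⟩ => ⟨hcC, hU hqc.le hqU⟩
  · intro hlt
    by_contra hqU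
    refine hlt.not_ge (card_le_card fun c => ?_)
    simp only [mem_filter, mem_univ, true_and]
    rintro ⟨hcC, hcU⟩
    refine ⟨hcC, (hC.total hq hcC).elim (fun h => h.lt_of_ne ?_) fun h => absurd (hU h hcU) hqU⟩
    rintro rfl
    exact hqU hcU

lemma card_filter_lt_lt_of_lt {q q' : Q} (hq : q ∈ C) (h : q < q') :
    #{c | c ∈ C ∧ c < q} < #{c | c ∈ C ∧ c < q'} := by
  refine card_lt_card ((ssubset_iff_of_subset fun c => ?_).mpr ⟨q, by simp [hq, h], by simp⟩)
  simp only [mem_filter, mem_univ, true_and]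
  exact fun ⟨hcC, hcq⟩ => ⟨hcC, hcq.trans h⟩

lemma card_filter_gt_lt_of_lt {q q' : Q} (hq' : q' ∈ C) (h : q < q') :
    #{c | c ∈ C ∧ q' < c} < #{c | c ∈ C ∧ q < c} := by
  refine card_lt_card ((ssubset_iff_of_subset fun c => ?_).mpr ⟨q', by simp [hq', h], by simp⟩)
  simp only [mem_filter, mem_univ, true_and]
  exact fun ⟨hcC, hqc⟩ => ⟨hcC, h.trans hqc⟩

lemma IsChain.injOn_card_filter_lt (hC : IsChain (· ≤ ·) C) :
    Set.InjOn (fun q => #{c | c ∈ C ∧ c < q}) C := by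
  intro q hq q' hq' h
  by_contra hne
  rcases hC.total hq hq' with hle | hle
  · exact (card_filter_lt_lt_of_lt hq (hle.lt_of_ne hne)).ne h
  · exact (card_filter_lt_lt_of_lt hq' (hle.lt_of_ne (Ne.symm hne))).ne h.symm

lemma IsChain.injOn_card_filter_gt (hC : IsChain (· ≤ ·) C) :
    Set.InjOn (fun q => #{c | c ∈ C ∧ q < c}) C := by
  intro q hq q' hq' h
  by_contra hne
  rcases hC.total hq hq' with hle | hle
  · exact (card_filter_gt_lt_of_lt hq' (hle.lt_of_ne hne)).ne h.symm
  · exact (card_filter_gt_lt_of_lt hq (hle.lt_of_ne (Ne.symm hne))).ne h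

variable (C D) in
/-- A position for every coordinate of `Option Q`, `none` being the coordinate of the bordering
row of ones: first `C` upwards, then `none`, then `D` downwards. -/
noncomputable def chainPos : Option Q → ℕ
  | none => #{c | c ∈ C}
  | some q => if q ∈ C then #{c | c ∈ C ∧ c < q} else #{c | c ∈ C} + 1 + #{c | c ∈ D ∧ q < c}

lemma chainPos_lt (hCD : IsCompl C D) (x : Option Q) : chainPos C D x < Fintype.card Q + 1 := by
  have hcard := card_filter_add_card_filter_of_isCompl hCD
  rcases x with _ | q
  · simp only [chainPos]
    omega
  · simp only [chainPos]
    split_ifs with hq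
    · have := card_filter_mem_and_lt hq (· < q) (lt_irrefl q)
      omega
    · have := card_filter_mem_and_lt (hCD.compl_eq ▸ hq : q ∈ D) (q < ·) (lt_irrefl q)
      omega

lemma chainPos_injective (hCD : IsCompl C D) (hC : IsChain (· ≤ ·) C) (hD : IsChain (· ≤ ·) D) :
    Function.Injective (chainPos C D) := by
  have hmemD {q : Q} (hq : q ∉ C) : q ∈ D := hCD.compl_eq ▸ hq
  have hlt {q : Q} (hq : q ∈ C) := card_filter_mem_and_lt hq (· < q) (lt_irrefl q)
  rintro (_ | q) (_ | q') h <;> simp only [chainPos] at h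
  · rfl
  · split_ifs at h with hq'
    · exact absurd h (hlt hq').ne'
    · omega
  · split_ifs at h with hq
    · exact absurd h (hlt hq).ne
    · omega
  · split_ifs at h with hq hq' hq'
    · exact congrArg some (hC.injOn_card_filter_lt hq hq' h)
    · have := hlt hq
      omega
    · have := hlt hq'
      omega
    · exact congrArg some (hD.injOn_card_filter_gt (hmemD hq) (hmemD hq') (by simp only; omega))

lemma exists_chainPos_interval (hCD : IsCompl C D) (hC : IsChain (· ≤ ·) C)
    (hD : IsChain (· ≤ ·) D) {U : Set Q} (hU : IsUpperSet U) :
    ∃ a b : ℕ, (a ≤ chainPos C D none ∧ chainPos C D none < b) ∧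
      ∀ q, q ∈ U ↔ a ≤ chainPos C D (some q) ∧ chainPos C D (some q) < b := by
  refine ⟨#{c | c ∈ C ∧ c ∉ U}, #{c | c ∈ C} + 1 + #{c | c ∈ D ∧ c ∈ U},
    ⟨card_le_card fun c => by simp +contextual, by simp only [chainPos]; omega⟩, fun q => ?_⟩
  simp only [chainPos]
  split_ifs with hq
  · have := card_filter_mem_and_lt hq (· < q) (lt_irrefl q)
    rw [hC.mem_upperSet_iff_card_le hU hq]
    omega
  · rw [hD.mem_upperSet_iff_card_lt hU (hCD.compl_eq ▸ hq : q ∈ D)]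
    have : #{c | c ∈ C ∧ c ∉ U} ≤ #{c | c ∈ C} := card_le_card fun c => by simp +contextual
    omega

end TwoChains

theorem det_eq_one_or_neg_one_of_isChain {Q : Type*} [PartialOrder Q] {d : ℕ} {C D : Set Q}
    (hCD : IsCompl C D) (hC : IsChain (· ≤ ·) C) (hD : IsChain (· ≤ ·) D)
    (u : Fin (d + 1) → Q → ℝ) (hu : ∀ i, u i ∈ OPVertexSet Q) (hind : AffineIndependent ℝ u)
    (e : Q ≃ Fin d) :
    (of fun i j : Fin d => (u j.succ - u 0) (e.symm i)).det = 1 ∨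
      (of fun i j : Fin d => (u j.succ - u 0) (e.symm i)).det = -1 := by
  classical
  let _ : Fintype Q := Fintype.ofEquiv _ e.symm
  have hcard : Fintype.card Q = d := by simp [Fintype.card_congr e]
  let τ : Option Q ≃ Fin (d + 1) := Equiv.ofBijective
    (fun x => ⟨chainPos C D x, hcard ▸ chainPos_lt hCD x⟩)
    ((Fintype.bijective_iff_injective_and_card _).mpr
      ⟨fun x y h => chainPos_injective hCD hC hD (congrArg Fin.val h), by simp [hcard]⟩)
  let ρ : Fin (d + 1) ≃ Fin (d + 1) := ((finSuccEquiv d).trans e.symm.optionCongr).trans τ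
  choose U hU hUu using hu
  choose a b hnone hsome using fun j =>
    exists_chainPos_interval hCD hC hD (U := U j) fun _ _ hle hmem => hU j _ hmem _ hle
  have hB : (of fun i j : Fin (d + 1) =>
      (Fin.cons 1 (fun k => u j (e.symm k)) : Fin (d + 1) → ℝ) i) =
        (intervalMatrix (d + 1) a b).submatrix ρ id := by
    ext i j
    cases i using Fin.cases with
    | zero => simp [intervalMatrix, ρ, τ, -Equiv.optionCongr_symm, hnone j]
    | succ k =>
      simp [intervalMatrix, ρ, τ, -Equiv.optionCongr_symm, hUu j, Set.indicator_apply, hsome j]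
  have hdet := det_cons_one_eq_det_sub d fun j k => u j (e.symm k)
  rw [hB, det_permute] at hdet
  refine eq_one_or_eq_neg_one_of_mem_range_signType ?_
    (det_sub_ne_zero_of_affineIndependent u hind e)
  rw [show (of fun i j : Fin d => (u j.succ - u 0) (e.symm i)) =
    of fun i j => u j.succ (e.symm i) - u 0 (e.symm i) from rfl, ← hdet]
  exact mul_mem_range_signType (Int.cast_units_mem_range_signType _) (det_intervalMatrix_mem _ _ _)

section SnakeOrder

variable {n : ℕ} {w : ℕ → Letter}

/-- Besides `0̂` and `0`, the meet-irreducible elements of `P̂(w)` are `irrElt t = 1, 2, 4, …`,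
for `t ≤ n + 1`; `IsLeft w t` says which of the two chains of `Q_w` contains `irrElt t`. -/
def irrElt (t : ℕ) : ℕ := if t = 0 then 1 else 2 * t

def IsLeft (w : ℕ → Letter) (t : ℕ) : Prop := t = 0 ∨ (2 ≤ t ∧ w (t - 1) = Letter.L)

lemma irrElt_le (t : ℕ) : irrElt t ≤ 2 * t + 1 := by
  unfold irrElt
  split_ifs <;> omega

lemma irrElt_lt {t : ℕ} (ht : t ≤ n + 1) : irrElt t < 2 * n + 4 := by
  have := irrElt_le t
  omega

lemma irrElt_pos (t : ℕ) : 0 < irrElt t := by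
  unfold irrElt
  split_ifs <;> omega

lemma irrElt_injective : Function.Injective irrElt := by
  intro t t' h
  unfold irrElt at h
  split_ifs at h <;> omega

lemma snakeSide_eq_iff {m : ℕ} (hm : 1 ≤ m) :
    snakeSide w m = 2 * m ↔ (IsLeft w m ↔ IsLeft w (m + 1)) := by
  unfold snakeSide IsLeft
  obtain rfl | hm2 := eq_or_lt_of_le hm
  · cases w 1 <;> simp
  · have : m ≠ 0 := by omega
    have : m ≠ 1 := by omega
    have : 2 * m - 1 ≠ 2 * m := by omega
    cases w (m - 1) <;> cases h : w m <;> simp [*, Nat.succ_le_of_lt hm2]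

lemma snakeSide_eq_or (m : ℕ) : snakeSide w m = 2 * m - 1 ∨ snakeSide w m = 2 * m := by
  unfold snakeSide
  split_ifs <;> simp

lemma snakeCov_odd_odd {j : ℕ} (hj : j ≤ n) : SnakeCov n w (2 * j + 3) (2 * j + 1) := by
  rcases j with _ | j
  exacts [SnakeCov.cov31, SnakeCov.covOdd _ (by omega) hj]

lemma snakeCov_odd_even {j : ℕ} (hj : j ≤ n) : SnakeCov n w (2 * j + 3) (2 * j + 2) := by
  rcases j with _ | j
  exacts [SnakeCov.cov32, SnakeCov.covBot _ (by omega) hj]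

lemma snakeLE_odd_of_le {j b : ℕ} (hj : j ≤ n + 1) (hb : b ≤ 2 * j + 1) :
    SnakeLE n w (2 * j + 1) b := by
  induction j generalizing b with
  | zero =>
    obtain rfl | rfl : b = 0 ∨ b = 1 := by omega
    exacts [.single SnakeCov.cov10, .refl]
  | succ j ih =>
    obtain hb | hb | hb : b = 2 * j + 3 ∨ b = 2 * j + 2 ∨ b ≤ 2 * j + 1 := by omega
    · exact hb ▸ .refl
    · exact hb ▸ .single (snakeCov_odd_even (by omega))
    · exact .head (snakeCov_odd_odd (by omega)) (ih (by omega) hb)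

lemma snakeLE_irrElt_of_lt : ∀ {t t' : ℕ}, t ≤ n + 1 → t' < t → (IsLeft w t' ↔ IsLeft w t) →
    SnakeLE n w (irrElt t) (irrElt t')
  | 0, _, _, h, _ => absurd h (Nat.not_lt_zero _)
  | 1, t', _, h, hside => by
    obtain rfl : t' = 0 := by omega
    simp [IsLeft] at hside
  | t + 2, t', ht, hlt, hside => by
    have hcov : SnakeCov n w (irrElt (t + 2)) (snakeSide w (t + 1)) := by
      simpa [irrElt, mul_add] using SnakeCov.covSide (n := n) (w := w) (t + 1) (by omega) (by omega)
    by_cases hs : IsLeft w (t + 1) ↔ IsLeft w (t + 2)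
    · have hside' : snakeSide w (t + 1) = irrElt (t + 1) := by
        rw [(snakeSide_eq_iff (by omega)).mpr hs, irrElt, if_neg (by omega)]
      rw [hside'] at hcov
      obtain hlt' | rfl := Nat.lt_succ_iff_lt_or_eq.mp hlt
      · exact .head hcov (snakeLE_irrElt_of_lt (by omega) hlt' (hside.trans hs.symm))
      · exact .single hcov
    · -- at a turn, `irrElt (t + 2)` is covered by the odd element `2t + 1`, below all of `0, …, 2t`
      have hside' : snakeSide w (t + 1) = 2 * t + 1 := by
        have := mt (snakeSide_eq_iff (w := w) (m := t + 1) (by omega)).mp hs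
        have := snakeSide_eq_or (w := w) (t + 1)
        omega
      have hne : t' ≠ t + 1 := by
        rintro rfl
        exact hs hside
      rw [hside'] at hcov
      exact .head hcov (snakeLE_odd_of_le (by omega) ((irrElt_le t').trans (by omega)))

lemma snakeLE_irrElt_zero {t : ℕ} (ht : t ≤ n + 1) (hl : IsLeft w t) :
    SnakeLE n w (irrElt t) 0 := by
  rcases Nat.eq_zero_or_pos t with rfl | hpos
  · exact .single SnakeCov.cov10
  · exact (snakeLE_irrElt_of_lt ht hpos (iff_of_true (Or.inl rfl) hl)).tail SnakeCov.cov10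

def irrCover (w : ℕ → Letter) (t : ℕ) : ℕ := if t ≤ 1 then 0 else snakeSide w (t - 1)

lemma snakeCov_irrElt_iff {t b : ℕ} (ht : t ≤ n + 1) :
    SnakeCov n w (irrElt t) b ↔ b = irrCover w t := by
  constructor
  · intro h
    generalize hv : irrElt t = v at h
    cases h <;> unfold irrElt irrCover at * <;> split_ifs at * <;> first | omega | (congr 1; omega)
  · rintro rfl
    unfold irrElt irrCover
    rcases t with _ | _ | t
    · exact SnakeCov.cov10
    · exact SnakeCov.cov20
    · simpa [mul_add] using SnakeCov.covSide (n := n) (w := w) (t + 1) (by omega) (by omega)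

end SnakeOrder

lemma meetIrred_of_forall_lt_imp_le {α : Type*} [PartialOrder α] {x c : α} (hxc : x < c)
    (h : ∀ y, x < y → c ≤ y) : MeetIrred x := by
  refine ⟨fun htop => hxc.not_ge (htop c), fun y z hglb => ?_⟩
  by_contra! hne
  have hy := h y ((hglb.1 (by simp)).lt_of_ne hne.1)
  have hz := h z ((hglb.1 (by simp)).lt_of_ne hne.2)
  exact hxc.not_ge (hglb.2 (by simp [lowerBounds, hy, hz]))

section SnakeQ

variable {n : ℕ} {w : ℕ → Letter}

lemma SnakeHat.le_of_lt_of_forall_snakeCov {x y c : SnakeHat n w} (hx : x.1 < 2 * n + 4)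
    (hcov : ∀ b, SnakeCov n w x.1 b → SnakeHatLE n w c.1 b) (hxy : x < y) : c ≤ y := by
  obtain ⟨hle, hne⟩ := lt_iff_le_and_ne.mp hxy
  rcases hle with h | h | ⟨-, hy, hxy⟩
  · omega
  · exact Or.inr (Or.inl h)
  · rcases Relation.ReflTransGen.cases_head hxy with h | ⟨b, hxb, hby⟩
    · exact absurd (Fin.ext h) hne
    · have hb := (snakeCov_lt hxb).trans hx
      rcases hcov b hxb with hc | hc | ⟨hc, -, hcb⟩
      · exact Or.inl hc
      · omega
      · exact Or.inr (Or.inr ⟨hc, hy, hcb.trans hby⟩)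

lemma meetIrred_of_snakeCov {x c : SnakeHat n w} (hx : x.1 < 2 * n + 4) (hxc : x < c)
    (hcov : ∀ b, SnakeCov n w x.1 b → SnakeHatLE n w c.1 b) : MeetIrred x :=
  meetIrred_of_forall_lt_imp_le hxc fun _ => SnakeHat.le_of_lt_of_forall_snakeCov hx hcov

/-- The `n + 4` meet-irreducible elements `0̂ = 2n+5`, `0` and `irrElt t` of `P̂(w)`. -/
def meetIrredVal (n : ℕ) : Option (Option (Fin (n + 2))) → ℕ
  | none => 2 * n + 5
  | some none => 0
  | some (some t) => irrElt t

lemma meetIrredVal_lt (o : Option (Option (Fin (n + 2)))) : meetIrredVal n o < 2 * n + 6 := by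
  rcases o with _ | _ | t
  · simp [meetIrredVal]
  · simp [meetIrredVal]
  · have := irrElt_lt (n := n) (Nat.le_of_lt_succ t.2)
    simp only [meetIrredVal]
    omega

lemma meetIrredVal_injective : Function.Injective (meetIrredVal n) := by
  have hbound (t : Fin (n + 2)) : 0 < irrElt t ∧ irrElt t < 2 * n + 4 :=
    ⟨irrElt_pos t, irrElt_lt (Nat.le_of_lt_succ t.2)⟩
  rintro (_ | _ | t) (_ | _ | t') h <;> simp only [meetIrredVal] at h
  · rfl
  · omega
  · have := hbound t'
    omega
  · omega
  · rfl
  · have := hbound t'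
    omega
  · have := hbound t
    omega
  · have := hbound t
    omega
  · exact congrArg (some ∘ some) (Fin.ext (irrElt_injective h))

lemma meetIrred_meetIrredVal (o : Option (Option (Fin (n + 2)))) :
    MeetIrred (α := SnakeHat n w) ⟨meetIrredVal n o, meetIrredVal_lt o⟩ := by
  rcases o with _ | _ | t
  · refine meetIrred_of_forall_lt_imp_le (c := ⟨2 * n + 3, by omega⟩)
      (lt_of_le_of_ne (Or.inl rfl) fun h => by simpa [meetIrredVal] using congrArg Fin.val h)
      fun y hy => ?_
    have hy5 : y.1 ≠ 2 * n + 5 := fun h => hy.ne (Fin.ext h.symm)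
    by_cases hy4 : y.1 = 2 * n + 4
    · exact Or.inr (Or.inl hy4)
    · have hy' : y.1 < 2 * n + 4 := by
        have := y.2
        omega
      have := snakeLE_odd_of_le (n := n) (w := w) (j := n + 1) le_rfl (b := y.1) (by omega)
      exact Or.inr (Or.inr ⟨Nat.lt_succ_self _, hy',
        by rwa [show 2 * (n + 1) + 1 = 2 * n + 3 by ring] at this⟩)
  · refine meetIrred_of_snakeCov (c := ⟨2 * n + 4, by omega⟩) (by simp [meetIrredVal])
      (lt_of_le_of_ne (Or.inr (Or.inl rfl))
        fun h => by simpa [meetIrredVal] using congrArg Fin.val h)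
      fun b hb => absurd (snakeCov_lt hb) (by simp [meetIrredVal])
  · have ht : (t : ℕ) ≤ n + 1 := Nat.le_of_lt_succ t.2
    have hcov : SnakeCov n w (irrElt t) (irrCover w t) := (snakeCov_irrElt_iff ht).mpr rfl
    have hlt := snakeCov_lt hcov
    have hx := irrElt_lt (n := n) ht
    refine meetIrred_of_snakeCov (c := ⟨irrCover w t, by omega⟩) hx
      (lt_of_le_of_ne (Or.inr (Or.inr ⟨hx, by simp only; omega, .single hcov⟩))
        fun h => hlt.ne (by simpa [meetIrredVal] using (congrArg Fin.val h).symm)) fun b hb => ?_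
    rw [(snakeCov_irrElt_iff ht).mp hb]
    exact le_refl (α := SnakeHat n w) _

lemma SnakeQ.exists_meetIrredVal_eq (e : SnakeQ n w ≃ Fin (n + 4)) (q : SnakeQ n w) :
    ∃ o, q.1.1 = meetIrredVal n o := by
  let f : Option (Option (Fin (n + 2))) → SnakeQ n w := fun o =>
    ⟨⟨meetIrredVal n o, meetIrredVal_lt o⟩, meetIrred_meetIrredVal o⟩
  have hf : Function.Injective f := fun o o' h =>
    meetIrredVal_injective (congrArg (fun q : SnakeQ n w => q.1.1) h)
  have : Finite (SnakeQ n w) := Finite.of_equiv _ e.symm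
  obtain ⟨o, rfl⟩ := (hf.bijective_of_nat_card_le (by simp [Nat.card_congr e])).2 q
  exact ⟨o, rfl⟩

lemma SnakeQ.le_of_snakeLE {q q' : SnakeQ n w} (hq : q.1.1 < 2 * n + 4) (hq' : q'.1.1 < 2 * n + 4)
    (h : SnakeLE n w q.1.1 q'.1.1) : q ≤ q' :=
  Or.inr (Or.inr ⟨hq, hq', h⟩)

lemma SnakeQ.total_of_irrElt {q q' : SnakeQ n w} {t t' : ℕ} (ht : t ≤ n + 1) (ht' : t' ≤ n + 1)
    (hq : q.1.1 = irrElt t) (hq' : q'.1.1 = irrElt t') (hside : IsLeft w t ↔ IsLeft w t') :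
    q ≤ q' ∨ q' ≤ q := by
  have hlt := irrElt_lt (n := n) ht
  have hlt' := irrElt_lt (n := n) ht'
  rcases lt_trichotomy t t' with h | rfl | h
  · exact Or.inr (SnakeQ.le_of_snakeLE (hq' ▸ hlt') (hq ▸ hlt)
      (hq ▸ hq' ▸ snakeLE_irrElt_of_lt ht' h hside))
  · exact Or.inl (le_of_eq (Subtype.ext (Fin.ext (hq.trans hq'.symm))))
  · exact Or.inl (SnakeQ.le_of_snakeLE (hq ▸ hlt) (hq' ▸ hlt')
      (hq ▸ hq' ▸ snakeLE_irrElt_of_lt ht h hside.symm))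

variable (n w) in
def leftChain : Set (SnakeQ n w) :=
  {q | q.1.1 = 2 * n + 5 ∨ q.1.1 = 0 ∨ ∃ t ≤ n + 1, IsLeft w t ∧ q.1.1 = irrElt t}

lemma isChain_leftChain : IsChain (· ≤ ·) (leftChain n w) := by
  have hbot {q q' : SnakeQ n w} (h : q.1.1 = 2 * n + 5) : q ≤ q' := Or.inl h
  have htop {q q' : SnakeQ n w} (hq : q ∈ leftChain n w) (h' : q'.1.1 = 0) : q ≤ q' := by
    rcases hq with h | h | ⟨t, ht, hl, h⟩
    · exact hbot h
    · exact le_of_eq (Subtype.ext (Fin.ext (h.trans h'.symm)))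
    · exact SnakeQ.le_of_snakeLE (h ▸ irrElt_lt ht) (by omega)
        (h ▸ h' ▸ snakeLE_irrElt_zero ht hl)
  rintro q hq q' hq' -
  rcases hq with h | h | ⟨t, ht, hl, h⟩
  · exact Or.inl (hbot h)
  · exact Or.inr (htop hq' h)
  · rcases hq' with h' | h' | ⟨t', ht', hl', h'⟩
    · exact Or.inr (hbot h')
    · exact Or.inl (htop (Or.inr (Or.inr ⟨t, ht, hl, h⟩)) h')
    · exact SnakeQ.total_of_irrElt ht ht' h h' (iff_of_true hl hl')

lemma isChain_compl_leftChain (e : SnakeQ n w ≃ Fin (n + 4)) :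
    IsChain (· ≤ ·) (leftChain n w)ᶜ := by
  have hright (q : SnakeQ n w) (hq : q ∉ leftChain n w) :
      ∃ t ≤ n + 1, ¬IsLeft w t ∧ q.1.1 = irrElt t := by
    obtain ⟨_ | _ | t, h⟩ := SnakeQ.exists_meetIrredVal_eq e q
    · exact absurd (Or.inl h) hq
    · exact absurd (Or.inr (Or.inl h)) hq
    · exact ⟨t, by omega, fun hl => hq (Or.inr (Or.inr ⟨t, by omega, hl, h⟩)), h⟩
  rintro q hq q' hq' -
  obtain ⟨t, ht, hl, h⟩ := hright q hq
  obtain ⟨t', ht', hl', h'⟩ := hright q' hq'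
  exact SnakeQ.total_of_irrElt ht ht' h h' (iff_of_false hl hl')

end SnakeQ

theorem stmt15_general (n : ℕ) (w : ℕ → Letter)
    (u : Fin (n + 5) → SnakeQ n w → ℝ)
    (hu : ∀ i, u i ∈ OPVertexSet (SnakeQ n w))
    (hind : AffineIndependent ℝ u)
    (e : SnakeQ n w ≃ Fin (n + 4)) :
    (Matrix.of fun i j : Fin (n + 4) => (u j.succ - u 0) (e.symm i)).det = 1 ∨
      (Matrix.of fun i j : Fin (n + 4) => (u j.succ - u 0) (e.symm i)).det = -1 :=
  det_eq_one_or_neg_one_of_isChain isCompl_compl isChain_leftChain (isChain_compl_leftChain e)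
    u hu hind e

theorem stmt15 (n : ℕ) (w : ℕ → Letter) (hw : InV n w)
    (u : Fin (n + 5) → SnakeQ n w → ℝ)
    (hu : ∀ i, u i ∈ OPVertexSet (SnakeQ n w))
    (hind : AffineIndependent ℝ u)
    (e : SnakeQ n w ≃ Fin (n + 4)) :
    (Matrix.of fun i j : Fin (n + 4) => (u j.succ - u 0) (e.symm i)).det = 1 ∨
      (Matrix.of fun i j : Fin (n + 4) => (u j.succ - u 0) (e.symm i)).det = -1 :=
  stmt15_general n w u hu hind e
end

section
/- Let n ≥ 1 and let w = εL^{n−1} be the generalized snake word of length n−1 all of whose letters are L (so w ∈ 𝒱). Then every circuit of the vertex set V(Q_w) of the order polytope O(Q_w) has exactly four elements, and the number of circuits of V(Q_w) equals binomial(n+1, 2). -/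
/-!
For `w = ε Lᵏ` (`k = n - 1`) the meet-irreducibles of `P̂(w)` form a poset `Q_w` which, after
relabelling, is a chain `0 < 1 < ⋯ < k+2` together with one more element `k+3` lying above `0`
and below `k+2` only. Its filters are `Q_w` itself, the tails `F_m = {m, …, k+2}`
(`1 ≤ m ≤ k+3`) and `G_m = F_m ∪ {k+3}` (`1 ≤ m ≤ k+2`).

Evaluating an affine dependence among the indicator vectors at `0`, at `k+3` and on the
differences of consecutive chain coordinates shows that `F_m` and `G_m` carry opposite weights,
that the weights of the `G_m` sum to zero and that all other weights vanish. So a dependent set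
of vertices contains two pairs `{F_m, G_m}` and `{F_m', G_m'}`, and these four points are
already dependent because `F_m - G_m = F_m' - G_m'`. The circuits are therefore exactly these
quadruples, one for each `2`-subset of `{1, …, k+2}`: there are `binom(n+1, 2)` of them.
-/

theorem meetIrred_of_forall_lt_le {α : Type*} [PartialOrder α] {x u : α} (hux : ¬u ≤ x)
    (hu : ∀ y, x < y → u ≤ y) : MeetIrred x := by
  refine ⟨fun htop => hux (htop u), fun y z hglb => ?_⟩
  by_contra! hne
  have hy : x < y := lt_of_le_of_ne (hglb.1 (by simp)) hne.1
  have hz : x < z := lt_of_le_of_ne (hglb.1 (by simp)) hne.2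
  exact hux (hglb.2 (by rintro v (rfl | rfl) <;> [exact hu _ hy; exact hu _ hz]))

section AffineIndependence

variable {R E : Type*} [Ring R] [AddCommGroup E] [Module R E]

theorem affineIndependent_subtype_iff_of_subset {Z : Set E} {V : Finset E} (hZV : Z ⊆ V) :
    AffineIndependent R (Subtype.val : Z → E) ↔
      ∀ g : E → R, (∀ v ∉ Z, g v = 0) → ∑ v ∈ V, g v = 0 → ∑ v ∈ V, g v • v = 0 →
        ∀ v, g v = 0 := by
  classical
  constructor
  · intro h g hgZ hsum hvec v
    by_cases hv : v ∈ Z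
    · refine affineIndependent_iff.1 h (V.subtype (· ∈ Z)) (fun j => g j) ?_ ?_ ⟨v, hv⟩
        (Finset.mem_subtype.2 (hZV hv))
      · rw [Finset.sum_subtype_eq_sum_filter, Finset.sum_filter_of_ne fun v _ hv => ?_, hsum]
        exact by_contra fun hvZ => hv (hgZ v hvZ)
      · rw [Finset.sum_subtype_eq_sum_filter (f := fun v => g v • v),
          Finset.sum_filter_of_ne fun v _ hv => ?_, hvec]
        exact by_contra fun hvZ => hv (by rw [hgZ v hvZ, zero_smul])
    · exact hgZ v hv
  · intro h
    rw [affineIndependent_iff]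
    intro s w hw hwv j hj
    let g : E → R := fun v => ∑ i ∈ s, if (i : E) = v then w i else 0
    have hgZ : ∀ v ∉ Z, g v = 0 := fun v hv =>
      Finset.sum_eq_zero fun i _ => if_neg fun hiv : (i : E) = v => hv (hiv ▸ i.2)
    have hsum : ∑ v ∈ V, g v = 0 := by
      rw [Finset.sum_comm]
      simp only [Finset.sum_ite_eq]
      rw [Finset.sum_congr rfl fun (i : Z) _ => if_pos (Finset.mem_coe.1 (hZV i.2)), hw]
    have hvec : ∑ v ∈ V, g v • v = 0 := by
      simp only [g, Finset.sum_smul, ite_smul, zero_smul]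
      rw [Finset.sum_comm]
      simp only [Finset.sum_ite_eq]
      rw [Finset.sum_congr rfl fun (i : Z) _ => if_pos (Finset.mem_coe.1 (hZV i.2)), hwv]
    simpa [g, Subtype.val_inj, hj] using h g hgZ hsum hvec j

theorem not_affineIndependent_of_add_eq_add [Nontrivial R] {a b c d : E} (hab : a ≠ b)
    (hac : a ≠ c) (had : a ≠ d) (h : a + d = b + c) :
    ¬AffineIndependent R (Subtype.val : ({a, b, c, d} : Set E) → E) := by
  classical
  intro hind
  let g : E → R := fun v => (if v = a then 1 else 0) - (if v = b then 1 else 0) -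
    (if v = c then 1 else 0) + (if v = d then 1 else 0)
  have hV : ({a, b, c, d} : Set E) ⊆ ({a, b, c, d} : Finset E) := by simp
  have := (affineIndependent_subtype_iff_of_subset hV).1 hind g ?_ ?_ ?_ a
  · simp [g, hab, hac, had] at this
  · intro v hv
    simp only [Set.mem_insert_iff, Set.mem_singleton_iff, not_or] at hv
    simp [g, hv]
  · simp [g, Finset.sum_add_distrib, Finset.sum_sub_distrib]
  · simp only [g, sub_smul, add_smul, ite_smul, one_smul, zero_smul, Finset.sum_add_distrib,
      Finset.sum_sub_distrib, Finset.sum_ite_eq', Finset.mem_insert, Finset.mem_singleton,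
      true_or, or_true, if_true]
    rw [sub_sub, sub_add_eq_add_sub, h, sub_self]

end AffineIndependence

abbrev allL : ℕ → Letter := fun _ => Letter.L

namespace AllL

variable {k : ℕ}

theorem snakeSide_allL (m : ℕ) : snakeSide allL m = if m = 1 then 1 else 2 * m := by
  unfold snakeSide
  split_ifs <;> simp_all

/-- In `P(ε Lᵏ)` the even elements form the chain `2k+2 < 2k < ⋯ < 4 < 1 < 0`, with `2 < 0`,
and every odd `a ≥ 3` lies below all `b < a`. -/
def ClosedLE (k a b : ℕ) : Prop :=
  b = a ∨ (1 ≤ a ∧ a ≤ 2 ∧ b = 0) ∨ (a % 2 = 1 ∧ 3 ≤ a ∧ a ≤ 2 * k + 3 ∧ b < a) ∨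
    (a % 2 = 0 ∧ 4 ≤ a ∧ a ≤ 2 * k + 2 ∧ (b ≤ 1 ∨ (b % 2 = 0 ∧ 4 ≤ b ∧ b < a)))

theorem closedLE_of_snakeLE {a b : ℕ} (h : SnakeLE k allL a b) : ClosedLE k a b := by
  induction h with
  | refl => exact Or.inl rfl
  | tail _ hbc ih =>
    unfold ClosedLE at ih ⊢
    cases hbc with
    | covSide m =>
      rw [snakeSide_allL]
      split_ifs <;> omega
    | _ => omega

theorem snakeLE_of_closedLE : ∀ a b, ClosedLE k a b → SnakeLE k allL a b := by
  intro a
  induction a using Nat.strong_induction_on with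
  | _ a IH =>
    intro b h
    have step : ∀ {c}, SnakeCov k allL a c → c < a → ClosedLE k c b → SnakeLE k allL a b :=
      fun hc hca hcb => Relation.ReflTransGen.head hc (IH _ hca b hcb)
    unfold ClosedLE at h
    obtain rfl | ⟨h1, h2, rfl⟩ | ⟨ho, h3, hk, hb⟩ | ⟨he, h4, hk, hb⟩ := h
    · exact Relation.ReflTransGen.refl
    · rcases (by omega : a = 1 ∨ a = 2) with rfl | rfl
      · exact step SnakeCov.cov10 (by omega) (Or.inl rfl)
      · exact step SnakeCov.cov20 (by omega) (Or.inl rfl)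
    · obtain ⟨m, rfl⟩ : ∃ m, a = 2 * m + 3 := ⟨(a - 3) / 2, by omega⟩
      rcases Nat.eq_zero_or_pos m with rfl | hm
      · rcases (by omega : b = 0 ∨ b = 1 ∨ b = 2) with rfl | rfl | rfl
        · exact step SnakeCov.cov31 (by omega) (by unfold ClosedLE; omega)
        · exact step SnakeCov.cov31 (by omega) (Or.inl rfl)
        · exact step SnakeCov.cov32 (by omega) (Or.inl rfl)
      · by_cases hb2 : b = 2 * m + 2
        · exact step (SnakeCov.covBot m hm (by omega)) (by omega) (Or.inl hb2)
        · exact step (SnakeCov.covOdd m hm (by omega)) (by omega) (by unfold ClosedLE; omega)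
    · obtain ⟨m, rfl⟩ : ∃ m, a = 2 * m + 2 := ⟨(a - 2) / 2, by omega⟩
      have hc := SnakeCov.covSide (n := k) (w := allL) m (by omega) (by omega)
      rw [snakeSide_allL] at hc
      split_ifs at hc
      · exact step hc (by omega) (by unfold ClosedLE; omega)
      · exact step hc (by omega) (by unfold ClosedLE; omega)

theorem snakeLE_allL_iff {a b : ℕ} : SnakeLE k allL a b ↔ ClosedLE k a b :=
  ⟨closedLE_of_snakeLE, snakeLE_of_closedLE a b⟩

def ClosedHatLE (k a b : ℕ) : Prop :=
  a = 2 * k + 5 ∨ b = 2 * k + 4 ∨ (a < 2 * k + 4 ∧ b < 2 * k + 4 ∧ ClosedLE k a b)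

theorem snakeHat_le_iff {x y : SnakeHat k allL} : x ≤ y ↔ ClosedHatLE k x.1 y.1 := by
  change SnakeHatLE k allL x.1 y.1 ↔ _
  unfold SnakeHatLE ClosedHatLE
  rw [snakeLE_allL_iff]

def IsQVal (k v : ℕ) : Prop :=
  v = 0 ∨ v = 1 ∨ v = 2 ∨ (v % 2 = 0 ∧ 4 ≤ v ∧ v ≤ 2 * k + 2) ∨ v = 2 * k + 5

def upperCover (k v : ℕ) : ℕ :=
  if v = 2 * k + 5 then 2 * k + 3 else if v = 0 then 2 * k + 4 else if v ≤ 2 then 0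
  else if v = 4 then 1 else v - 2

theorem upperCover_spec {v : ℕ} (hv : IsQVal k v) :
    ¬ClosedHatLE k (upperCover k v) v ∧
      ∀ b, ClosedHatLE k v b → b ≠ v → b < 2 * k + 6 → ClosedHatLE k (upperCover k v) b := by
  refine ⟨?_, fun b hvb hbv hb => ?_⟩ <;> unfold ClosedHatLE ClosedLE upperCover at * <;>
    rcases hv with rfl | rfl | rfl | hv | rfl <;> repeat' split
  all_goals omega

theorem meetIrred_of_isQVal {x : SnakeHat k allL} (hx : IsQVal k x.1) : MeetIrred x := by
  have hu : upperCover k x.1 < 2 * k + 6 := by unfold upperCover; split_ifs <;> omega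
  refine meetIrred_of_forall_lt_le (u := ⟨upperCover k x.1, hu⟩)
    (mt snakeHat_le_iff.1 (upperCover_spec hx).1) fun y hxy => snakeHat_le_iff.2 ?_
  exact (upperCover_spec hx).2 y.1 (snakeHat_le_iff.1 hxy.le)
    (fun h => hxy.ne (Fin.ext h).symm) y.2

theorem isGLB_odd_spec {a : ℕ} (hodd : a % 2 = 1) (h3 : 3 ≤ a) (ha : a ≤ 2 * k + 3) :
    ClosedHatLE k a (a - 2) ∧ ClosedHatLE k a (a - 1) ∧
      ∀ c, ClosedHatLE k c (a - 2) → ClosedHatLE k c (a - 1) → c < 2 * k + 6 →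
        ClosedHatLE k c a := by
  refine ⟨?_, ?_, fun c hc1 hc2 hc => ?_⟩ <;> unfold ClosedHatLE ClosedLE at * <;> omega

theorem isQVal_of_meetIrred {x : SnakeHat k allL} (hx : MeetIrred x) : IsQVal k x.1 := by
  by_contra hv
  have hx6 := x.2
  unfold IsQVal at hv
  rcases (by omega : x.1 = 2 * k + 4 ∨ (x.1 % 2 = 1 ∧ 3 ≤ x.1 ∧ x.1 ≤ 2 * k + 3)) with
    htop | ⟨hodd, h3, hle⟩
  · exact hx.1 fun y => snakeHat_le_iff.2 (Or.inr (Or.inl htop))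
  · obtain ⟨h1, h2, hglb⟩ := isGLB_odd_spec hodd h3 hle
    let y : SnakeHat k allL := ⟨x.1 - 2, by omega⟩
    let z : SnakeHat k allL := ⟨x.1 - 1, by omega⟩
    have hxyz : IsGLB {y, z} x := by
      refine ⟨?_, fun c hc => snakeHat_le_iff.2 (hglb c.1 ?_ ?_ c.2)⟩
      · rintro v (rfl | rfl) <;> exact snakeHat_le_iff.2 ‹_›
      · exact snakeHat_le_iff.1 (hc (Set.mem_insert _ _))
      · exact snakeHat_le_iff.1 (hc (Set.mem_insert_of_mem _ rfl))
    rcases hx.2 y z hxyz with h | h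
    · have : x.1 = x.1 - 2 := congrArg Fin.val h
      omega
    · have : x.1 = x.1 - 1 := congrArg Fin.val h
      omega

/-- `Q_w` is the chain `0 < 1 < ⋯ < k+2` together with an element `k+3` lying above `0`
and below `k+2` only. -/
def LabelLE (k l l' : ℕ) : Prop :=
  l = l' ∨ l = 0 ∨ l' = k + 2 ∨ (l ≤ l' ∧ l' ≤ k + 1)

/-- The element of `P̂(ε Lᵏ)` carrying label `l` in `Q_w`: `0̂`, the chain `2k+2 < ⋯ < 4 < 1 < 0`,
and finally `2`. -/
def valOf (k l : ℕ) : ℕ :=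
  if l = 0 then 2 * k + 5 else if l = k + 3 then 2 else if l = k + 2 then 0
  else if l = k + 1 then 1 else 2 * (k + 2 - l)

def labelOf (k v : ℕ) : ℕ :=
  if v = 2 * k + 5 then 0 else if v = 0 then k + 2 else if v = 1 then k + 1
  else if v = 2 then k + 3 else k + 2 - v / 2

theorem valOf_lt (k l : ℕ) : valOf k l < 2 * k + 6 := by
  unfold valOf; split_ifs <;> omega

theorem isQVal_valOf (k l : ℕ) : IsQVal k (valOf k l) := by
  unfold valOf IsQVal; split_ifs <;> omega

theorem labelOf_valOf {l : ℕ} (hl : l ≤ k + 3) : labelOf k (valOf k l) = l := by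
  unfold valOf labelOf; repeat' split
  all_goals omega

theorem valOf_labelOf {v : ℕ} (hv : IsQVal k v) : valOf k (labelOf k v) = v := by
  unfold IsQVal at hv; unfold valOf labelOf; repeat' split
  all_goals omega

theorem labelOf_le {v : ℕ} : labelOf k v ≤ k + 3 := by
  unfold labelOf; split_ifs <;> omega

theorem closedHatLE_valOf_iff {l l' : ℕ} (hl : l ≤ k + 3) (hl' : l' ≤ k + 3) :
    ClosedHatLE k (valOf k l) (valOf k l') ↔ LabelLE k l l' := by
  unfold valOf ClosedHatLE ClosedLE LabelLE; repeat' split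
  all_goals omega

def ofLabel (k l : ℕ) : SnakeQ k allL :=
  ⟨⟨valOf k l, valOf_lt k l⟩, meetIrred_of_isQVal (isQVal_valOf k l)⟩

def label (q : SnakeQ k allL) : ℕ := labelOf k q.1.1

theorem label_ofLabel {l : ℕ} (hl : l ≤ k + 3) : label (ofLabel k l) = l :=
  labelOf_valOf hl

theorem ofLabel_label (q : SnakeQ k allL) : ofLabel k (label q) = q :=
  Subtype.ext (Fin.ext (valOf_labelOf (isQVal_of_meetIrred q.2)))

theorem label_le (q : SnakeQ k allL) : label q ≤ k + 3 := labelOf_le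

theorem ofLabel_le_ofLabel_iff {l l' : ℕ} (hl : l ≤ k + 3) (hl' : l' ≤ k + 3) :
    ofLabel k l ≤ ofLabel k l' ↔ LabelLE k l l' :=
  snakeHat_le_iff.trans (closedHatLE_valOf_iff hl hl')

theorem le_iff_labelLE (q r : SnakeQ k allL) : q ≤ r ↔ LabelLE k (label q) (label r) := by
  conv_lhs => rw [← ofLabel_label q, ← ofLabel_label r]
  exact ofLabel_le_ofLabel_iff (label_le q) (label_le r)

def setF (k m : ℕ) : Set (SnakeQ k allL) := label ⁻¹' Set.Icc m (k + 2)

def setG (k m : ℕ) : Set (SnakeQ k allL) := label ⁻¹' insert (k + 3) (Set.Icc m (k + 2))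

noncomputable def vertF (k m : ℕ) : SnakeQ k allL → ℝ := (setF k m).indicator 1

noncomputable def vertG (k m : ℕ) : SnakeQ k allL → ℝ := (setG k m).indicator 1

theorem ofLabel_mem_setF {l m : ℕ} (hl : l ≤ k + 3) :
    ofLabel k l ∈ setF k m ↔ m ≤ l ∧ l ≤ k + 2 := by
  simp [setF, label_ofLabel hl]

theorem ofLabel_mem_setG {l m : ℕ} (hl : l ≤ k + 3) :
    ofLabel k l ∈ setG k m ↔ l = k + 3 ∨ m ≤ l ∧ l ≤ k + 2 := by
  simp [setG, label_ofLabel hl]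

theorem vertF_ofLabel {l m : ℕ} (hl : l ≤ k + 3) :
    vertF k m (ofLabel k l) = if m ≤ l ∧ l ≤ k + 2 then 1 else 0 := by
  classical
  simp [vertF, Set.indicator_apply, ofLabel_mem_setF hl]

theorem vertG_ofLabel {l m : ℕ} (hl : l ≤ k + 3) :
    vertG k m (ofLabel k l) = if l = k + 3 ∨ m ≤ l ∧ l ≤ k + 2 then 1 else 0 := by
  classical
  simp [vertG, Set.indicator_apply, ofLabel_mem_setG hl]

theorem eq_of_forall_ofLabel_mem_iff {A B : Set (SnakeQ k allL)}
    (h : ∀ l ≤ k + 3, ofLabel k l ∈ A ↔ ofLabel k l ∈ B) : A = B :=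
  Set.ext fun q => by simpa only [ofLabel_label] using h (label q) (label_le q)

theorem ofLabel_mem_iff_of_indicator_eq {A B : Set (SnakeQ k allL)}
    (h : A.indicator (1 : SnakeQ k allL → ℝ) = B.indicator 1) (l : ℕ) :
    ofLabel k l ∈ A ↔ ofLabel k l ∈ B := by
  rw [Set.indicator_one_inj ℝ h]

theorem vertF_injOn : Set.InjOn (vertF k) (Set.Icc 1 (k + 3)) := by
  intro m hm m' hm' h
  have h1 := ofLabel_mem_iff_of_indicator_eq h (min m (k + 2))
  have h2 := ofLabel_mem_iff_of_indicator_eq h (min m' (k + 2))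
  rw [ofLabel_mem_setF (by omega), ofLabel_mem_setF (by omega)] at h1 h2
  simp only [Set.mem_Icc] at hm hm'
  omega

theorem vertG_injOn : Set.InjOn (vertG k) (Set.Icc 1 (k + 2)) := by
  intro m hm m' hm' h
  have h1 := ofLabel_mem_iff_of_indicator_eq h m
  have h2 := ofLabel_mem_iff_of_indicator_eq h m'
  simp only [Set.mem_Icc] at hm hm'
  rw [ofLabel_mem_setG (by omega), ofLabel_mem_setG (by omega)] at h1 h2
  omega

theorem vertF_ne_vertG (m m' : ℕ) : vertF k m ≠ vertG k m' := fun h => by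
  simpa [ofLabel_mem_setF, ofLabel_mem_setG] using ofLabel_mem_iff_of_indicator_eq h (k + 3)

theorem one_ne_vertF {m : ℕ} (hm : 1 ≤ m) : (1 : SnakeQ k allL → ℝ) ≠ vertF k m := fun h => by
  have := congrFun h (ofLabel k 0)
  rw [vertF_ofLabel (by omega), if_neg (by omega)] at this
  exact one_ne_zero this

theorem one_ne_vertG {m : ℕ} (hm : 1 ≤ m) : (1 : SnakeQ k allL → ℝ) ≠ vertG k m := fun h => by
  have := congrFun h (ofLabel k 0)
  rw [vertG_ofLabel (by omega), if_neg (by omega)] at this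
  exact one_ne_zero this

theorem vertG_eq_vertF_add (m : ℕ) : vertG k m = vertF k m + vertG k (k + 3) := by
  funext q
  rw [← ofLabel_label q, Pi.add_apply, vertG_ofLabel (label_le q), vertF_ofLabel (label_le q),
    vertG_ofLabel (label_le q)]
  have := label_le q
  split_ifs <;> first | omega | norm_num

theorem setF_isFilter {m : ℕ} (hm : 1 ≤ m) : ∀ a ∈ setF k m, ∀ b, a ≤ b → b ∈ setF k m := by
  intro a ha b hab
  rw [le_iff_labelLE] at hab
  have := label_le b
  simp only [setF, Set.mem_preimage, Set.mem_Icc, LabelLE] at ha hab ⊢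
  omega

theorem setG_isFilter {m : ℕ} (hmk : m ≤ k + 2) :
    ∀ a ∈ setG k m, ∀ b, a ≤ b → b ∈ setG k m := by
  intro a ha b hab
  rw [le_iff_labelLE] at hab
  have := label_le b
  simp only [setG, Set.mem_preimage, Set.mem_insert_iff, Set.mem_Icc, LabelLE] at ha hab ⊢
  omega

theorem vertF_mem_OPVertexSet {m : ℕ} (hm : 1 ≤ m) : vertF k m ∈ OPVertexSet (SnakeQ k allL) :=
  ⟨setF k m, setF_isFilter hm, rfl⟩

theorem vertG_mem_OPVertexSet {m : ℕ} (hmk : m ≤ k + 2) :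
    vertG k m ∈ OPVertexSet (SnakeQ k allL) :=
  ⟨setG k m, setG_isFilter hmk, rfl⟩

theorem exists_chain_threshold {A : Set (SnakeQ k allL)} (hA : ∀ a ∈ A, ∀ b, a ≤ b → b ∈ A) :
    ∃ M, 1 ≤ M ∧ M ≤ k + 3 ∧ ∀ l, 1 ≤ l → l ≤ k + 2 → (ofLabel k l ∈ A ↔ M ≤ l) := by
  classical
  -- the least chain label in `A`, or `k + 3` if there is none
  have hex : ∃ l, l = k + 3 ∨ 1 ≤ l ∧ ofLabel k l ∈ A := ⟨k + 3, Or.inl rfl⟩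
  have hM := Nat.find_spec hex
  have hMle : Nat.find hex ≤ k + 3 := Nat.find_min' hex (Or.inl rfl)
  refine ⟨Nat.find hex, by rcases hM with hM | hM <;> omega, hMle, fun l h1 h2 =>
    ⟨fun hl => Nat.find_min' hex (Or.inr ⟨h1, hl⟩), fun hMl => ?_⟩⟩
  rcases hM with hM | ⟨-, hMA⟩
  · omega
  · exact hA _ hMA _ ((ofLabel_le_ofLabel_iff hMle (by omega)).2 (by unfold LabelLE; omega))

theorem isFilter_cases {A : Set (SnakeQ k allL)} (hA : ∀ a ∈ A, ∀ b, a ≤ b → b ∈ A) :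
    A = Set.univ ∨ (∃ m ∈ Finset.Icc 1 (k + 3), A = setF k m) ∨
      ∃ m ∈ Finset.Icc 1 (k + 2), A = setG k m := by
  have hup : ∀ {l l'}, l ≤ k + 3 → l' ≤ k + 3 → LabelLE k l l' → ofLabel k l ∈ A →
      ofLabel k l' ∈ A :=
    fun hl hl' h hA' => hA _ hA' _ ((ofLabel_le_ofLabel_iff hl hl').2 h)
  by_cases h0 : ofLabel k 0 ∈ A
  · refine Or.inl (Set.eq_univ_of_forall fun q => ?_)
    rw [← ofLabel_label q]
    exact hup (by omega) (label_le q) (Or.inr (Or.inl rfl)) h0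
  obtain ⟨M, hM1, hMle, hchain⟩ := exists_chain_threshold hA
  have hcases : ∀ l ≤ k + 3, l = 0 ∨ (1 ≤ l ∧ l ≤ k + 2) ∨ l = k + 3 := by omega
  by_cases he : ofLabel k (k + 3) ∈ A
  · have hMk : M ≤ k + 2 := (hchain (k + 2) (by omega) le_rfl).1
      (hup le_rfl (by omega) (Or.inr (Or.inr (Or.inl rfl))) he)
    refine Or.inr (Or.inr ⟨M, Finset.mem_Icc.2 ⟨hM1, hMk⟩,
      eq_of_forall_ofLabel_mem_iff fun l hl => ?_⟩)
    rw [ofLabel_mem_setG hl]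
    rcases hcases l hl with rfl | ⟨h1, h2⟩ | rfl
    · simp only [h0, false_iff]; omega
    · rw [hchain l h1 h2]; omega
    · simp only [he, true_or]
  · refine Or.inr (Or.inl ⟨M, Finset.mem_Icc.2 ⟨hM1, hMle⟩,
      eq_of_forall_ofLabel_mem_iff fun l hl => ?_⟩)
    rw [ofLabel_mem_setF hl]
    rcases hcases l hl with rfl | ⟨h1, h2⟩ | rfl
    · simp only [h0, false_iff]; omega
    · rw [hchain l h1 h2]; omega
    · simp only [he, false_iff]; omega

open Classical in
noncomputable def vertices (k : ℕ) : Finset (SnakeQ k allL → ℝ) :=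
  insert 1 ((Finset.Icc 1 (k + 3)).image (vertF k) ∪ (Finset.Icc 1 (k + 2)).image (vertG k))

theorem OPVertexSet_subset_vertices : OPVertexSet (SnakeQ k allL) ⊆ vertices k := by
  rintro v ⟨A, hA, rfl⟩
  rcases isFilter_cases hA with rfl | ⟨m, hm, rfl⟩ | ⟨m, hm, rfl⟩
  · simp [vertices, Pi.one_def]
  · simp only [vertices, Finset.coe_insert, Finset.coe_union, Finset.coe_image]
    exact Or.inr (Or.inl ⟨m, hm, rfl⟩)
  · simp only [vertices, Finset.coe_insert, Finset.coe_union, Finset.coe_image]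
    exact Or.inr (Or.inr ⟨m, hm, rfl⟩)

theorem sum_vertices {M : Type*} [AddCommMonoid M] (φ : (SnakeQ k allL → ℝ) → M) :
    ∑ v ∈ vertices k, φ v = φ 1 + ∑ m ∈ Finset.Icc 1 (k + 3), φ (vertF k m) +
      ∑ m ∈ Finset.Icc 1 (k + 2), φ (vertG k m) := by
  classical
  have hF : Set.InjOn (vertF k) ↑(Finset.Icc 1 (k + 3)) := by simpa using vertF_injOn
  have hG : Set.InjOn (vertG k) ↑(Finset.Icc 1 (k + 2)) := by simpa using vertG_injOn
  rw [vertices, Finset.sum_insert, Finset.sum_union, Finset.sum_image hF, Finset.sum_image hG,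
    add_assoc]
  · simp only [Finset.disjoint_left, Finset.mem_image]
    rintro _ ⟨m, -, rfl⟩ ⟨m', -, h⟩
    exact vertF_ne_vertG m m' h.symm
  · simp only [Finset.mem_union, Finset.mem_image, Finset.mem_Icc, not_or, not_exists, not_and]
    exact ⟨fun m hm h => one_ne_vertF hm.1 h.symm, fun m hm h => one_ne_vertG hm.1 h.symm⟩

theorem vertF_ofLabel_sub {l m : ℕ} (hl : 1 ≤ l) (hlk : l ≤ k + 2) :
    vertF k m (ofLabel k l) - vertF k m (ofLabel k (l - 1)) = if l = m then 1 else 0 := by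
  rw [vertF_ofLabel (by omega), vertF_ofLabel (by omega)]
  split_ifs <;> first | omega | norm_num

theorem vertG_ofLabel_sub {l m : ℕ} (hl : 1 ≤ l) (hlk : l ≤ k + 2) :
    vertG k m (ofLabel k l) - vertG k m (ofLabel k (l - 1)) = if l = m then 1 else 0 := by
  rw [vertG_ofLabel (by omega), vertG_ofLabel (by omega)]
  split_ifs <;> first | omega | norm_num

theorem weights_of_affine_relation {g : (SnakeQ k allL → ℝ) → ℝ}
    (hsum : ∑ v ∈ vertices k, g v = 0) (hvec : ∑ v ∈ vertices k, g v • v = 0) :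
    g 1 = 0 ∧ g (vertF k (k + 3)) = 0 ∧
      (∀ m ∈ Finset.Icc 1 (k + 2), g (vertF k m) + g (vertG k m) = 0) ∧
      ∑ m ∈ Finset.Icc 1 (k + 2), g (vertG k m) = 0 := by
  have hlin : ∀ f : (SnakeQ k allL → ℝ) →ₗ[ℝ] ℝ, g 1 * f 1 +
      ∑ m ∈ Finset.Icc 1 (k + 3), g (vertF k m) * f (vertF k m) +
      ∑ m ∈ Finset.Icc 1 (k + 2), g (vertG k m) * f (vertG k m) = 0 := fun f => by
    rw [sum_vertices] at hvec
    simpa only [map_add, map_sum, map_smul, smul_eq_mul, map_zero] using congrArg f hvec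
  let ev (q : SnakeQ k allL) : (SnakeQ k allL → ℝ) →ₗ[ℝ] ℝ := LinearMap.proj q
  have hbot : g 1 = 0 := by
    simpa [ev, vertF_ofLabel, vertG_ofLabel] using hlin (ev (ofLabel k 0))
  have hpair : ∀ m ∈ Finset.Icc 1 (k + 2), g (vertF k m) + g (vertG k m) = 0 := by
    intro l hl
    rw [Finset.mem_Icc] at hl
    simpa [ev, vertF_ofLabel_sub hl.1 hl.2, vertG_ofLabel_sub hl.1 hl.2, hl,
      show l ≤ k + 3 by omega] using hlin (ev (ofLabel k l) - ev (ofLabel k (l - 1)))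
  have htop : ∑ m ∈ Finset.Icc 1 (k + 2), g (vertG k m) = 0 := by
    simpa [ev, vertF_ofLabel, vertG_ofLabel, hbot] using hlin (ev (ofLabel k (k + 3)))
  refine ⟨hbot, ?_, hpair, htop⟩
  have hF : ∑ m ∈ Finset.Icc 1 (k + 2), g (vertF k m) = 0 := by
    rw [Finset.sum_congr rfl fun m hm => eq_neg_of_add_eq_zero_left (hpair m hm),
      Finset.sum_neg_distrib, htop, neg_zero]
  rw [sum_vertices, Finset.sum_Icc_succ_top (by omega : 1 ≤ k + 2 + 1), hF, htop, hbot] at hsum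
  simpa using hsum

theorem affineIndependent_of_pairs {Y : Set (SnakeQ k allL → ℝ)}
    (hY : Y ⊆ OPVertexSet (SnakeQ k allL))
    (hpairs : ∀ m ∈ Finset.Icc 1 (k + 2), ∀ m' ∈ Finset.Icc 1 (k + 2),
      vertF k m ∈ Y → vertG k m ∈ Y → vertF k m' ∈ Y → vertG k m' ∈ Y → m = m') :
    AffineIndependent ℝ (Subtype.val : Y → SnakeQ k allL → ℝ) := by
  refine (affineIndependent_subtype_iff_of_subset (hY.trans OPVertexSet_subset_vertices)).2
    fun g hgY hsum hvec => ?_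
  obtain ⟨hbot, htop, hpair, hG⟩ := weights_of_affine_relation hsum hvec
  have hG_of_not : ∀ m ∈ Finset.Icc 1 (k + 2), ¬(vertF k m ∈ Y ∧ vertG k m ∈ Y) →
      g (vertG k m) = 0 := fun m hm h => by
    by_cases hF : vertF k m ∈ Y
    · exact hgY _ fun hG' => h ⟨hF, hG'⟩
    · simpa [hgY _ hF] using hpair m hm
  -- at most one pair `F_m, G_m` lies in `Y`, so `hG` reduces to a single term
  have hGm : ∀ m ∈ Finset.Icc 1 (k + 2), g (vertG k m) = 0 := by
    intro m hm
    by_cases hmY : vertF k m ∈ Y ∧ vertG k m ∈ Y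
    · refine (Finset.sum_eq_single m (fun m' hm' hne => hG_of_not m' hm' fun h => hne ?_)
        (fun h => (h hm).elim)).symm.trans hG
      exact hpairs m' hm' m hm h.1 h.2 hmY.1 hmY.2
    · exact hG_of_not m hm hmY
  intro v
  by_cases hv : v ∈ Y
  · have := OPVertexSet_subset_vertices (hY hv)
    simp only [vertices, Finset.coe_insert, Finset.coe_union, Finset.coe_image,
      Set.mem_insert_iff, Set.mem_union, Set.mem_image, Finset.mem_coe] at this
    rcases this with rfl | ⟨m, hm, rfl⟩ | ⟨m, hm, rfl⟩
    · exact hbot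
    · rcases eq_or_ne m (k + 3) with rfl | hne
      · exact htop
      · have hm' : m ∈ Finset.Icc 1 (k + 2) := by simp only [Finset.mem_Icc] at hm ⊢; omega
        simpa [hGm m hm'] using hpair m hm'
    · exact hGm m hm
  · exact hgY v hv

def pairCircuit (k : ℕ) (S : Finset ℕ) : Set (SnakeQ k allL → ℝ) :=
  vertF k '' S ∪ vertG k '' S

theorem pairCircuit_pair (m m' : ℕ) :
    pairCircuit k {m, m'} = {vertF k m, vertG k m, vertF k m', vertG k m'} := by
  ext v
  simp only [pairCircuit, Finset.coe_insert, Finset.coe_singleton, Set.image_insert_eq,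
    Set.image_singleton, Set.mem_union, Set.mem_insert_iff, Set.mem_singleton_iff]
  tauto

theorem pairCircuit_subset {S : Finset ℕ} (hS : S ⊆ Finset.Icc 1 (k + 2)) :
    pairCircuit k S ⊆ OPVertexSet (SnakeQ k allL) := by
  rintro v (⟨m, hm, rfl⟩ | ⟨m, hm, rfl⟩) <;> have := Finset.mem_Icc.1 (hS hm)
  · exact vertF_mem_OPVertexSet this.1
  · exact vertG_mem_OPVertexSet this.2

theorem vertF_mem_pairCircuit_iff {S : Finset ℕ} (hS : S ⊆ Finset.Icc 1 (k + 2)) {m : ℕ}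
    (hm : m ∈ Finset.Icc 1 (k + 2)) : vertF k m ∈ pairCircuit k S ↔ m ∈ S := by
  refine ⟨?_, fun h => Or.inl ⟨m, h, rfl⟩⟩
  rintro (⟨m', hm', h⟩ | ⟨m', -, h⟩)
  · have h1 := Finset.mem_Icc.1 (hS hm')
    have h2 := Finset.mem_Icc.1 hm
    rwa [vertF_injOn ⟨h1.1, by omega⟩ ⟨h2.1, by omega⟩ h] at hm'
  · exact (vertF_ne_vertG m m' h.symm).elim

theorem not_affineIndependent_pairCircuit {m m' : ℕ} (hm : m ∈ Finset.Icc 1 (k + 2))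
    (hm' : m' ∈ Finset.Icc 1 (k + 2)) (hne : m ≠ m') :
    ¬AffineIndependent ℝ (Subtype.val : pairCircuit k {m, m'} → SnakeQ k allL → ℝ) := by
  rw [pairCircuit_pair]
  rw [Finset.mem_Icc] at hm hm'
  refine not_affineIndependent_of_add_eq_add (vertF_ne_vertG m m)
    (fun h => hne (vertF_injOn ⟨hm.1, by omega⟩ ⟨hm'.1, by omega⟩ h)) (vertF_ne_vertG m m') ?_
  rw [vertG_eq_vertF_add m, vertG_eq_vertF_add m']
  abel

theorem isAffCircuit_pairCircuit {S : Finset ℕ}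
    (hS : S ∈ (Finset.Icc 1 (k + 2)).powersetCard 2) : IsAffCircuit (pairCircuit k S) := by
  obtain ⟨hSsub, hcard⟩ := Finset.mem_powersetCard.1 hS
  refine ⟨?_, fun Y hY => affineIndependent_of_pairs (hY.subset.trans (pairCircuit_subset hSsub))
    fun a ha b hb hFa hGa hFb hGb => by_contra fun hab => hY.not_subset ?_⟩
  · obtain ⟨m, m', hne, rfl⟩ := Finset.card_eq_two.1 hcard
    exact not_affineIndependent_pairCircuit (hSsub (by simp)) (hSsub (by simp)) hne
  · have haS := (vertF_mem_pairCircuit_iff hSsub ha).1 (hY.subset hFa)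
    have hbS := (vertF_mem_pairCircuit_iff hSsub hb).1 (hY.subset hFb)
    have hab' : {a, b} = S := Finset.eq_of_subset_of_card_le
      (Finset.insert_subset_iff.2 ⟨haS, Finset.singleton_subset_iff.2 hbS⟩)
      (by rw [hcard, Finset.card_pair hab])
    rw [← hab', pairCircuit_pair]
    rintro v (rfl | rfl | rfl | rfl) <;> assumption

theorem exists_eq_pairCircuit {Z : Set (SnakeQ k allL → ℝ)}
    (hZ : Z ⊆ OPVertexSet (SnakeQ k allL)) (hc : IsAffCircuit Z) :
    ∃ S ∈ (Finset.Icc 1 (k + 2)).powersetCard 2, Z = pairCircuit k S := by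
  obtain ⟨m, hm, m', hm', hFm, hGm, hFm', hGm', hne⟩ : ∃ m ∈ Finset.Icc 1 (k + 2),
      ∃ m' ∈ Finset.Icc 1 (k + 2), vertF k m ∈ Z ∧ vertG k m ∈ Z ∧ vertF k m' ∈ Z ∧
        vertG k m' ∈ Z ∧ m ≠ m' := by
    by_contra! h
    exact hc.1 (affineIndependent_of_pairs hZ h)
  have hsub : pairCircuit k {m, m'} ⊆ Z := by
    rw [pairCircuit_pair]
    rintro v (rfl | rfl | rfl | rfl) <;> assumption
  refine ⟨{m, m'}, Finset.mem_powersetCard.2 ⟨?_, Finset.card_pair hne⟩,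
    (hsub.eq_or_ssubset.resolve_right fun hss =>
      not_affineIndependent_pairCircuit hm hm' hne (hc.2 _ hss)).symm⟩
  exact Finset.insert_subset_iff.2 ⟨hm, Finset.singleton_subset_iff.2 hm'⟩

theorem circuits_eq : {Z : Set (SnakeQ k allL → ℝ) |
    Z ⊆ OPVertexSet (SnakeQ k allL) ∧ IsAffCircuit Z} =
      pairCircuit k '' ↑((Finset.Icc 1 (k + 2)).powersetCard 2) := by
  ext Z
  constructor
  · rintro ⟨hZ, hc⟩
    obtain ⟨S, hS, rfl⟩ := exists_eq_pairCircuit hZ hc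
    exact ⟨S, hS, rfl⟩
  · rintro ⟨S, hS, rfl⟩
    exact ⟨pairCircuit_subset (Finset.mem_powersetCard.1 hS).1, isAffCircuit_pairCircuit hS⟩

theorem pairCircuit_injOn :
    Set.InjOn (pairCircuit k) ↑((Finset.Icc 1 (k + 2)).powersetCard 2) := by
  intro S hS T hT h
  have hS' := (Finset.mem_powersetCard.1 hS).1
  have hT' := (Finset.mem_powersetCard.1 hT).1
  ext m
  by_cases hm : m ∈ Finset.Icc 1 (k + 2)
  · rw [← vertF_mem_pairCircuit_iff hS' hm, ← vertF_mem_pairCircuit_iff hT' hm, h]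
  · exact iff_of_false (fun h => hm (hS' h)) (fun h => hm (hT' h))

theorem ncard_pairCircuit {S : Finset ℕ} (hS : S ⊆ Finset.Icc 1 (k + 2)) :
    (pairCircuit k S).ncard = 2 * S.card := by
  have hS' : (S : Set ℕ) ⊆ Set.Icc 1 (k + 2) := by
    rw [← Finset.coe_Icc]
    exact Finset.coe_subset.2 hS
  rw [pairCircuit, Set.ncard_union_eq, (vertF_injOn.mono (hS'.trans ?_)).ncard_image,
    (vertG_injOn.mono hS').ncard_image, Set.ncard_coe_finset, two_mul]
  · exact Set.Icc_subset_Icc_right (by omega)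
  · exact Set.disjoint_left.2 fun v ⟨m, _, hm⟩ ⟨m', _, hm'⟩ =>
      vertF_ne_vertG m m' (hm.trans hm'.symm)

end AllL

theorem stmt16 (n : ℕ) (hn : 1 ≤ n) :
    (∀ Z : Set (SnakeQ (n - 1) (fun _ => Letter.L) → ℝ),
      Z ⊆ OPVertexSet (SnakeQ (n - 1) (fun _ => Letter.L)) → IsAffCircuit Z →
        Z.ncard = 4) ∧
    {Z : Set (SnakeQ (n - 1) (fun _ => Letter.L) → ℝ) |
        Z ⊆ OPVertexSet (SnakeQ (n - 1) (fun _ => Letter.L)) ∧ IsAffCircuit Z}.ncard =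
      (n + 1).choose 2 := by
  obtain ⟨k, rfl⟩ : ∃ k, n = k + 1 := ⟨n - 1, by omega⟩
  rw [Nat.add_sub_cancel]
  refine ⟨fun Z hZ hc => ?_, ?_⟩
  · obtain ⟨S, hS, rfl⟩ := AllL.exists_eq_pairCircuit hZ hc
    obtain ⟨hSsub, hcard⟩ := Finset.mem_powersetCard.1 hS
    rw [AllL.ncard_pairCircuit hSsub, hcard]
  · rw [AllL.circuits_eq, AllL.pairCircuit_injOn.ncard_image, Set.ncard_coe_finset,
      Finset.card_powersetCard, Nat.card_Icc, Nat.add_sub_cancel]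
end
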